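/- arXiv:1910.10278 — 7 statements merged into one kernel-verified Lean document; each statement's English description precedes it below -/
import Mathlib

section
/- Let I be a nonempty finite set, for each i ∈ I let g_i ∈ Z[x] be primitive and irreducible in Z[x], let p be a prime, and suppose f = (∏_{i∈I} g_i)/p lies in Int(Z) and is irreducible in Int(Z). Then there do not exist two interchangeable subsets of I, i.e., there are no nonempty disjoint subsets J_1, J_2 ⊊ I with fixdiv(∏_{i∈J_1} g_i · ∏_{i∈I∖J_2} g_i) = fixdiv(∏_{i∈J_2} g_i · ∏_{i∈I∖J_1} g_i) = (p). -/
open Polynomial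

noncomputable section

/-- The ring `Int(ℤ)` of integer-valued polynomials, as a subring of `ℚ[X]`. -/
def IntZ : Subring (Polynomial ℚ) where
  carrier := {f : Polynomial ℚ | ∀ n : ℤ, ∃ m : ℤ, f.eval (n : ℚ) = (m : ℚ)}
  zero_mem' := fun n => ⟨0, by simp⟩
  one_mem' := fun n => ⟨1, by simp⟩
  add_mem' := by
    rintro a b ha hb n
    obtain ⟨m₁, h₁⟩ := ha n
    obtain ⟨m₂, h₂⟩ := hb n
    exact ⟨m₁ + m₂, by simp [h₁, h₂]⟩
  mul_mem' := by
    rintro a b ha hb n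
    obtain ⟨m₁, h₁⟩ := ha n
    obtain ⟨m₂, h₂⟩ := hb n
    exact ⟨m₁ * m₂, by simp [h₁, h₂]⟩
  neg_mem' := by
    rintro a ha n
    obtain ⟨m, h⟩ := ha n
    exact ⟨-m, by simp [h]⟩

/-- Two (multisets of) factorizations are *essentially the same* if they can be matched up
so that corresponding factors are associated. -/
def EssentiallySame {R : Type*} [CommMonoid R] (s t : Multiset R) : Prop :=
  Multiset.Rel Associated s t

/-- An element `r` is *absolutely irreducible* if it is irreducible and for every `n > 1`
every factorization of `r ^ n` into irreducibles is essentially the same as `r ⋯ r`. -/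
def AbsolutelyIrreducible {R : Type*} [CommMonoid R] (r : R) : Prop :=
  Irreducible r ∧
    ∀ n : ℕ, 1 < n → ∀ s : Multiset R, (∀ a ∈ s, Irreducible a) →
      s.prod = r ^ n → EssentiallySame s (Multiset.replicate n r)

/-- The fixed divisor of `g ∈ ℤ[X]`: the ideal of `ℤ` generated by the values of `g`. -/
def fixdiv (g : Polynomial ℤ) : Ideal ℤ :=
  Ideal.span (Set.range fun a : ℤ => g.eval a)

/-- The canonical map `ℤ[X] → ℚ[X]`. -/
def toQ (g : Polynomial ℤ) : Polynomial ℚ :=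
  g.map (Int.castRingHom ℚ)

/-- Lemma `inter:p`.
If `f = (∏ i, g i) / p` (with `p` prime) is irreducible in `Int(ℤ)`, then there are
no interchangeable subsets of `I`: no nonempty disjoint proper subsets `J₁, J₂ ⊊ I` with
`fixdiv(∏_{J₁} g · ∏_{I∖J₂} g) = fixdiv(∏_{J₂} g · ∏_{I∖J₁} g) = (p)`. -/
theorem stmt1 {ι : Type} [Fintype ι] [Nonempty ι] [DecidableEq ι]
    (g : ι → Polynomial ℤ)
    (hprim : ∀ i, (g i).IsPrimitive) (hirrZ : ∀ i, Irreducible (g i))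
    (p : ℕ) (hp : p.Prime)
    (hf : Polynomial.C ((p : ℚ))⁻¹ * toQ (∏ i, g i) ∈ IntZ)
    (hirr : Irreducible (⟨_, hf⟩ : IntZ)) :
    ¬ ∃ J₁ J₂ : Finset ι,
        J₁.Nonempty ∧ J₂.Nonempty ∧ J₁ ≠ Finset.univ ∧ J₂ ≠ Finset.univ ∧
        Disjoint J₁ J₂ ∧
        fixdiv ((∏ i ∈ J₁, g i) * ∏ i ∈ J₂ᶜ, g i) = Ideal.span {(p : ℤ)} ∧
        fixdiv ((∏ i ∈ J₂, g i) * ∏ i ∈ J₁ᶜ, g i) = Ideal.span {(p : ℤ)} := by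
  rintro ⟨J₁, J₂, hJ₁ne, hJ₂ne, hJ₁u, hJ₂u, hdisj, hfd1, _hfd2⟩
  have hpQ : (p : ℚ) ≠ 0 := Nat.cast_ne_zero.mpr hp.ne_zero
  have hpZ : Prime (p : ℤ) := Nat.prime_iff_prime_int.mp hp
  have hgne : ∀ i, g i ≠ 0 := fun i => (hirrZ i).ne_zero
  have hgdeg : ∀ i, (g i).natDegree ≠ 0 := by
    intro i h
    have hC : g i = Polynomial.C ((g i).coeff 0) := Polynomial.eq_C_of_natDegree_eq_zero h
    have : IsUnit ((g i).coeff 0) := hprim i _ (dvd_of_eq hC.symm)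
    exact (hirrZ i).not_isUnit (hC ▸ Polynomial.isUnit_C.mpr this)
  have key : ∀ a : ℤ, (p : ℤ) ∣ (∏ i ∈ J₂ᶜ, g i).eval a := by
    intro a
    have hmem : ((∏ i ∈ J₁, g i) * ∏ i ∈ J₂ᶜ, g i).eval a ∈
        fixdiv ((∏ i ∈ J₁, g i) * ∏ i ∈ J₂ᶜ, g i) :=
      Ideal.subset_span ⟨a, rfl⟩
    rw [hfd1, Ideal.mem_span_singleton, Polynomial.eval_mul] at hmem
    rcases hpZ.dvd_mul.mp hmem with h | h
    · have hsub : J₁ ⊆ J₂ᶜ := fun i hi =>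
        Finset.mem_compl.mpr fun hi2 => Finset.disjoint_left.mp hdisj hi hi2
      exact h.trans (Polynomial.eval_dvd (Finset.prod_dvd_prod_of_subset _ _ _ hsub))
    · exact h
  have evalQ : ∀ (G : Polynomial ℤ) (n : ℤ), (toQ G).eval (n : ℚ) = ((G.eval n : ℤ) : ℚ) := by
    intro G n
    simp [toQ, Polynomial.eval_map, Polynomial.eval₂_at_intCast]
  set H : Polynomial ℚ := Polynomial.C ((p : ℚ))⁻¹ * toQ (∏ i ∈ J₂ᶜ, g i) with hHdef
  set K : Polynomial ℚ := toQ (∏ i ∈ J₂, g i) with hKdef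
  have hH : H ∈ IntZ := by
    intro n
    obtain ⟨m, hm⟩ := key n
    refine ⟨m, ?_⟩
    rw [hHdef, Polynomial.eval_mul, Polynomial.eval_C, evalQ, hm]
    push_cast
    field_simp
  have hK : K ∈ IntZ := by
    intro n
    exact ⟨(∏ i ∈ J₂, g i).eval n, evalQ _ n⟩
  have hmul : (⟨_, hf⟩ : IntZ) = ⟨H, hH⟩ * ⟨K, hK⟩ := by
    apply Subtype.ext
    show Polynomial.C ((p : ℚ))⁻¹ * toQ (∏ i, g i) = H * K
    rw [hHdef, hKdef]
    have : (∏ i, g i) = (∏ i ∈ J₂, g i) * ∏ i ∈ J₂ᶜ, g i :=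
      (Finset.prod_mul_prod_compl J₂ g).symm
    simp only [toQ]
    rw [this, Polynomial.map_mul]
    ring
  -- natDegree computations
  have hdegQ : ∀ G : Polynomial ℤ, (toQ G).natDegree = G.natDegree := fun G =>
    Polynomial.natDegree_map_eq_of_injective (Int.cast_injective (α := ℚ)) G
  have hprod : ∀ s : Finset ι, s.Nonempty → (∏ i ∈ s, g i).natDegree ≠ 0 := by
    intro s hs h
    rw [Polynomial.natDegree_prod _ _ (fun i _ => hgne i)] at h
    obtain ⟨i, hi⟩ := hs
    exact hgdeg i ((Finset.sum_eq_zero_iff.mp h) i hi)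
  rcases hirr.isUnit_or_isUnit hmul with hu | hu
  · have : IsUnit H := hu.map IntZ.subtype
    have hdeg : H.natDegree = 0 := Polynomial.natDegree_eq_zero_of_isUnit this
    rw [hHdef, Polynomial.natDegree_C_mul (inv_ne_zero hpQ), hdegQ] at hdeg
    exact hprod _ (Finset.nonempty_iff_ne_empty.mpr (fun h => hJ₂u ((Finset.compl_eq_empty_iff _).mp h))) hdeg
  · have : IsUnit K := hu.map IntZ.subtype
    have hdeg : K.natDegree = 0 := Polynomial.natDegree_eq_zero_of_isUnit this
    rw [hKdef, hdegQ] at hdeg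
    exact hprod _ hJ₂ne hdeg

end
end

section
/- Let I be a nonempty finite set, for each i ∈ I let g_i ∈ Z[x] be primitive and irreducible in Z[x], let b > 1 be a natural number with prime factorization b = ∏_{p∈P} p^{e_p} (P the set of prime divisors of b, e_p ≥ 1), and suppose f = (∏_{i∈I} g_i)/b lies in Int(Z) and is irreducible in Int(Z). If there exists a nonempty subset J ⊊ I such that for every p ∈ P and every integer s with p | ∏_{j∈J} g_j(s) one has v_p(∏_{j∈J} g_j(s)) > e_p, then f is not absolutely irreducible in Int(Z). -/
open Polynomial

noncomputable section

lemma my_exists_int_eval_ne_zero (p : Polynomial ℚ) (hp : p ≠ 0) : ∃ m : ℤ, p.eval (m : ℚ) ≠ 0 := by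
  by_contra h
  push_neg at h
  refine hp (p.eq_zero_of_infinite_isRoot ?_)
  refine Set.Infinite.mono ?_ (Set.infinite_range_of_injective (f := fun m : ℤ => (m : ℚ))
    fun a b hab => Int.cast_injective hab)
  rintro x ⟨m, rfl⟩
  exact h m

lemma my_toQ_eval (q : Polynomial ℤ) (m : ℤ) : (toQ q).eval (m : ℚ) = ((q.eval m : ℤ) : ℚ) := by
  rw [toQ, Polynomial.eval_intCast_map]
  simp

lemma my_toQ_natDegree (q : Polynomial ℤ) : (toQ q).natDegree = q.natDegree :=
  Polynomial.natDegree_map_eq_of_injective (by simpa using Int.cast_injective) q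

lemma my_const_unit (v : IntZ) (m : ℤ) (zv : ℤ) (hv : (v : Polynomial ℚ).eval (m:ℚ) = zv)
    (hdeg : (v : Polynomial ℚ).natDegree = 0) (habs : zv.natAbs = 1) : IsUnit v := by
  have hC : (v : Polynomial ℚ) = Polynomial.C ((v : Polynomial ℚ).coeff 0) :=
    eq_C_of_natDegree_eq_zero hdeg
  have hvc : (v : Polynomial ℚ) = Polynomial.C (zv : ℚ) := by
    rw [hC]
    congr 1
    have h2 := hv
    rw [hC] at h2
    simpa using h2
  rcases Int.natAbs_eq_iff.mp habs with h1 | h1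
  · have : v = 1 := Subtype.ext (by rw [hvc, h1]; simp)
    exact this ▸ isUnit_one
  · have : v = -1 := Subtype.ext (by rw [hvc, h1]; push_cast; simp)
    exact this ▸ isUnit_one.neg

lemma my_atomic :
    ∀ N : ℕ, ∀ h : IntZ, ∀ m : ℤ, ∀ z : ℤ, (h : Polynomial ℚ).eval (m : ℚ) = z → z ≠ 0 →
      ¬ IsUnit h → (h : Polynomial ℚ).natDegree + z.natAbs ≤ N →
      ∃ s : Multiset IntZ, (∀ a ∈ s, Irreducible a) ∧ s.prod = h := by
  intro N
  induction N using Nat.strong_induction_on with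
  | _ N ih =>
    intro h m z hz hz0 hu hN
    by_cases hi : Irreducible h
    · exact ⟨{h}, by simpa, by simp⟩
    rw [irreducible_iff] at hi
    push_neg at hi
    obtain ⟨u, v, huv, hnu, hnv⟩ := hi hu
    obtain ⟨zu, hzu⟩ := u.2 m
    obtain ⟨zv, hzv⟩ := v.2 m
    have hval : (u : Polynomial ℚ).eval (m : ℚ) * (v : Polynomial ℚ).eval (m : ℚ) = (z : ℚ) := by
      rw [← Polynomial.eval_mul, ← hz]
      congr 1
      exact_mod_cast congrArg (Subtype.val) huv.symm
    have hzuv : zu * zv = z := by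
      have : ((zu * zv : ℤ) : ℚ) = (z : ℚ) := by push_cast; rw [← hzu, ← hzv]; exact hval
      exact_mod_cast this
    have hzu0 : zu ≠ 0 := fun hh => hz0 (by simpa [hh] using hzuv.symm)
    have hzv0 : zv ≠ 0 := fun hh => hz0 (by simpa [hh] using hzuv.symm)
    have hu0 : (u : Polynomial ℚ) ≠ 0 := fun hh => hzu0 (by
      have := hzu; rw [hh] at this; simp at this; exact_mod_cast this.symm)
    have hv0 : (v : Polynomial ℚ) ≠ 0 := fun hh => hzv0 (by
      have := hzv; rw [hh] at this; simp at this; exact_mod_cast this.symm)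
    have hdeg : (h : Polynomial ℚ).natDegree
        = (u : Polynomial ℚ).natDegree + (v : Polynomial ℚ).natDegree := by
      have : (h : Polynomial ℚ) = (u : Polynomial ℚ) * (v : Polynomial ℚ) := by
        exact_mod_cast congrArg (Subtype.val) huv
      rw [this, Polynomial.natDegree_mul hu0 hv0]
    have habs : z.natAbs = zu.natAbs * zv.natAbs := by rw [← hzuv, Int.natAbs_mul]
    have hnu1 : 1 ≤ zu.natAbs := Nat.one_le_iff_ne_zero.mpr (Int.natAbs_ne_zero.mpr hzu0)
    have hnv1 : 1 ≤ zv.natAbs := Nat.one_le_iff_ne_zero.mpr (Int.natAbs_ne_zero.mpr hzv0)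
    have key : ∀ w : IntZ, ¬ IsUnit w → ∀ zw : ℤ, zw ≠ 0 →
        (w : Polynomial ℚ).eval (m : ℚ) = zw →
        1 ≤ (w : Polynomial ℚ).natDegree ∨ 2 ≤ zw.natAbs := by
      intro w hw zw hzw0 hzw
      by_contra hcon
      push_neg at hcon
      obtain ⟨h1, h2⟩ := hcon
      have hd0 : (w : Polynomial ℚ).natDegree = 0 := by omega
      have hzw1 : zw.natAbs = 1 := by
        have := Int.natAbs_ne_zero.mpr hzw0; omega
      exact hw (my_const_unit w m zw hzw hd0 hzw1)
    have hmul1 : zu.natAbs ≤ zu.natAbs * zv.natAbs := Nat.le_mul_of_pos_right _ (by omega)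
    have hmul2 : zv.natAbs ≤ zu.natAbs * zv.natAbs := Nat.le_mul_of_pos_left _ (by omega)
    have hltu : (u : Polynomial ℚ).natDegree + zu.natAbs < N := by
      rcases key v hnv zv hzv0 hzv with hc | hc
      · omega
      · have : zu.natAbs * 2 ≤ zu.natAbs * zv.natAbs := Nat.mul_le_mul_left _ hc
        omega
    have hltv : (v : Polynomial ℚ).natDegree + zv.natAbs < N := by
      rcases key u hnu zu hzu0 hzu with hc | hc
      · omega
      · have : 2 * zv.natAbs ≤ zu.natAbs * zv.natAbs := Nat.mul_le_mul_right _ hc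
        omega
    obtain ⟨su, hsu, hsup⟩ := ih _ hltu u m zu hzu hzu0 hnu le_rfl
    obtain ⟨sv, hsv, hsvp⟩ := ih _ hltv v m zv hzv hzv0 hnv le_rfl
    refine ⟨su + sv, ?_, ?_⟩
    · intro a ha
      rcases Multiset.mem_add.mp ha with ha | ha
      · exact hsu a ha
      · exact hsv a ha
    · rw [Multiset.prod_add, hsup, hsvp, ← huv]

lemma my_nat_dvd (b : ℕ) (hb : 1 < b) (X Y : ℕ) (hX : X ≠ 0) (hY : Y ≠ 0)
    (hdvd : b ∣ X * Y)
    (hkey : ∀ p : ℕ, p.Prime → p ∣ b → p ∣ X → p ^ (b.factorization p + 1) ∣ X) :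
    b ^ (b + 1) ∣ X ^ b * Y ^ (b + 1) := by
  have hb0 : b ≠ 0 := by omega
  have hXY0 : X ^ b * Y ^ (b + 1) ≠ 0 := mul_ne_zero (pow_ne_zero _ hX) (pow_ne_zero _ hY)
  rw [← Nat.factorization_le_iff_dvd (pow_ne_zero _ hb0) hXY0]
  have hfac := (Nat.factorization_le_iff_dvd hb0 (mul_ne_zero hX hY)).mpr hdvd
  rw [Finsupp.le_def]
  intro p
  rw [Nat.factorization_pow, Nat.factorization_mul (pow_ne_zero _ hX) (pow_ne_zero _ hY),
    Nat.factorization_pow, Nat.factorization_pow]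
  simp only [Finsupp.coe_add, Finsupp.coe_smul, Pi.add_apply, Pi.smul_apply, smul_eq_mul]
  set e := b.factorization p with he
  set vX := X.factorization p with hvX
  set vY := Y.factorization p with hvY
  by_cases he0 : e = 0
  · simp [he0]
  by_cases hp : p.Prime
  · have hpb : p ∣ b := Nat.dvd_of_factorization_pos (he ▸ he0)
    have hsum : e ≤ vX + vY := by
      have h1 := Finsupp.le_def.mp hfac p
      rwa [Nat.factorization_mul hX hY, Finsupp.add_apply] at h1
    by_cases hvX0 : vX = 0
    · have : e ≤ vY := by omega
      have : (b + 1) * e ≤ (b + 1) * vY := Nat.mul_le_mul_left _ this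
      omega
    · have hpX : p ∣ X := Nat.dvd_of_factorization_pos (hvX ▸ hvX0)
      have h2 : e + 1 ≤ vX :=
        (Nat.Prime.pow_dvd_iff_le_factorization hp hX).mp (hkey p hp hpb hpX)
      have heb : e < b := by rw [he]; exact Nat.factorization_lt p hb0
      nlinarith
  · exfalso; exact he0 (he ▸ Nat.factorization_eq_zero_of_not_prime b hp)

lemma my_int_dvd (b : ℕ) (hb : 1 < b) (x y : ℤ) (hdvd : (b : ℤ) ∣ x * y)
    (hkey : ∀ p : ℕ, p.Prime → p ∣ b → (p : ℤ) ∣ x → ((p : ℤ) ^ (b.factorization p + 1)) ∣ x) :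
    ((b : ℤ)) ^ (b + 1) ∣ x ^ b * y ^ (b + 1) := by
  rcases eq_or_ne x 0 with rfl | hx
  · rw [zero_pow (by omega : b ≠ 0)]; simp
  rcases eq_or_ne y 0 with rfl | hy
  · rw [zero_pow (by omega : b + 1 ≠ 0)]; simp
  have hcast : ((b : ℤ)) ^ (b + 1) = ((b ^ (b + 1) : ℕ) : ℤ) := by push_cast; ring
  rw [hcast, Int.natCast_dvd]
  have habs : (x ^ b * y ^ (b + 1)).natAbs = x.natAbs ^ b * y.natAbs ^ (b + 1) := by
    rw [Int.natAbs_mul, Int.natAbs_pow, Int.natAbs_pow]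
  rw [habs]
  refine my_nat_dvd b hb _ _ (Int.natAbs_ne_zero.mpr hx) (Int.natAbs_ne_zero.mpr hy) ?_ ?_
  · have : b ∣ (x * y).natAbs := Int.natCast_dvd.mp hdvd
    rwa [Int.natAbs_mul] at this
  · intro p hp hpb hpX
    have h1 : (p : ℤ) ∣ x := Int.natCast_dvd.mpr hpX
    have h2 := hkey p hp hpb h1
    have h3 : ((p ^ (b.factorization p + 1) : ℕ) : ℤ) ∣ x := by push_cast; exact h2
    exact Int.natCast_dvd.mp h3

/-- Lemma `type2_non-abs`.
Let `f = (∏ i, g i) / b` be irreducible in `Int(ℤ)`, `b > 1`. If there is a nonempty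
proper subset `J ⊊ I` such that for every prime `p ∣ b` and every integer `s` which is a
root mod `p` of `∏_{j∈J} g j`, the `p`-adic valuation of `∏_{j∈J} g j (s)` exceeds
`e_p := v_p(b)` (i.e. `p^(e_p+1)` divides it), then `f` is not absolutely irreducible. -/
theorem stmt2 {ι : Type} [Fintype ι] [Nonempty ι] [DecidableEq ι]
    (g : ι → Polynomial ℤ)
    (hprim : ∀ i, (g i).IsPrimitive) (hirrZ : ∀ i, Irreducible (g i))
    (b : ℕ) (hb : 1 < b)
    (hf : Polynomial.C ((b : ℚ))⁻¹ * toQ (∏ i, g i) ∈ IntZ)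
    (hirr : Irreducible (⟨_, hf⟩ : IntZ))
    (J : Finset ι) (hJne : J.Nonempty) (hJprop : J ≠ Finset.univ)
    (hkey : ∀ p : ℕ, p.Prime → p ∣ b → ∀ s : ℤ,
        (p : ℤ) ∣ (∏ j ∈ J, g j).eval s →
        ((p : ℤ) ^ (b.factorization p + 1)) ∣ (∏ j ∈ J, g j).eval s) :
    ¬ AbsolutelyIrreducible (⟨_, hf⟩ : IntZ) := by
  intro habs
  classical
  set G : Polynomial ℤ := ∏ j ∈ J, g j with hGdef
  set H : Polynomial ℤ := ∏ i ∈ Jᶜ, g i with hHdef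
  have hGH : G * H = ∏ i, g i := Finset.prod_mul_prod_compl J g
  have hg0 : ∀ i, g i ≠ 0 := fun i => (hirrZ i).ne_zero
  have hbQ : (b : ℚ) ≠ 0 := by positivity
  have hgdeg : ∀ i, 1 ≤ (g i).natDegree := by
    intro i
    by_contra hd
    push_neg at hd
    have hd0 : (g i).natDegree = 0 := by omega
    have hC : g i = Polynomial.C ((g i).coeff 0) := (g i).eq_C_of_natDegree_eq_zero hd0
    have hunit : IsUnit ((g i).coeff 0) := hprim i ((g i).coeff 0) (hC ▸ dvd_refl _)
    exact (hirrZ i).not_isUnit (hC ▸ hunit.map Polynomial.C)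
  have hG0 : G ≠ 0 := Finset.prod_ne_zero_iff.mpr (fun i _ => hg0 i)
  have hH0 : H ≠ 0 := Finset.prod_ne_zero_iff.mpr (fun i _ => hg0 i)
  have hdG : 1 ≤ G.natDegree := by
    obtain ⟨j, hj⟩ := hJne
    rw [hGdef, Polynomial.natDegree_prod _ _ (fun i _ => hg0 i)]
    calc 1 ≤ (g j).natDegree := hgdeg j
      _ ≤ ∑ i ∈ J, (g i).natDegree :=
        Finset.single_le_sum (f := fun i => (g i).natDegree) (fun i _ => Nat.zero_le _) hj
  have hdH : 1 ≤ H.natDegree := by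
    have : ∃ i, i ∉ J := by
      by_contra hcon
      push_neg at hcon
      exact hJprop (Finset.eq_univ_iff_forall.mpr hcon)
    obtain ⟨j, hj⟩ := this
    rw [hHdef, Polynomial.natDegree_prod _ _ (fun i _ => hg0 i)]
    calc 1 ≤ (g j).natDegree := hgdeg j
      _ ≤ ∑ i ∈ Jᶜ, (g i).natDegree :=
        Finset.single_le_sum (f := fun i => (g i).natDegree) (fun i _ => Nat.zero_le _)
          (Finset.mem_compl.mpr hj)
  -- divisibility of values
  have hdvd : ∀ m : ℤ, (b : ℤ) ∣ G.eval m * H.eval m := by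
    intro m
    obtain ⟨z, hz⟩ := hf m
    rw [Polynomial.eval_mul, Polynomial.eval_C, my_toQ_eval] at hz
    have hz2 : (((∏ i, g i).eval m : ℤ) : ℚ) = ((b * z : ℤ) : ℚ) := by
      push_cast
      field_simp at hz
      linarith
    have hz3 : (∏ i, g i).eval m = b * z := by exact_mod_cast hz2
    refine ⟨z, ?_⟩
    rw [← Polynomial.eval_mul, hGH, hz3]
  -- the element A
  have hA : Polynomial.C (((b : ℚ) ^ (b + 1))⁻¹) * toQ (G ^ b * H ^ (b + 1)) ∈ IntZ := by
    intro m
    have hd := my_int_dvd b hb (G.eval m) (H.eval m) (hdvd m)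
      (fun p hp hpb hx => hkey p hp hpb m hx)
    obtain ⟨c, hc⟩ := hd
    refine ⟨c, ?_⟩
    rw [Polynomial.eval_mul, Polynomial.eval_C, my_toQ_eval]
    have heval : (G ^ b * H ^ (b + 1)).eval m = (G.eval m) ^ b * (H.eval m) ^ (b + 1) := by
      simp
    have hval : (((G ^ b * H ^ (b + 1)).eval m : ℤ) : ℚ) = ((b : ℚ)) ^ (b + 1) * (c : ℚ) := by
      rw [heval, hc]
      push_cast
      ring
    rw [hval]
    field_simp
  have hB : toQ G ∈ IntZ := fun m => ⟨G.eval m, my_toQ_eval G m⟩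
  -- the key identity
  have hprodEq : (⟨_, hA⟩ : IntZ) * (⟨_, hB⟩ : IntZ) = (⟨_, hf⟩ : IntZ) ^ (b + 1) := by
    apply Subtype.ext
    rw [MulMemClass.coe_mul, SubmonoidClass.coe_pow]
    show (Polynomial.C (((b : ℚ) ^ (b + 1))⁻¹) * toQ (G ^ b * H ^ (b + 1))) * toQ G
      = (Polynomial.C ((b : ℚ))⁻¹ * toQ (∏ i, g i)) ^ (b + 1)
    rw [← hGH]
    simp only [toQ, Polynomial.map_mul, Polynomial.map_pow]
    rw [mul_pow, ← Polynomial.C_pow, inv_pow]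
    ring
  -- degrees and nonunit facts
  have hAdeg : (Polynomial.C (((b : ℚ) ^ (b + 1))⁻¹) * toQ (G ^ b * H ^ (b + 1))).natDegree
      = b * G.natDegree + (b + 1) * H.natDegree := by
    rw [Polynomial.natDegree_C_mul (inv_ne_zero (pow_ne_zero _ hbQ)), my_toQ_natDegree,
      Polynomial.natDegree_mul (pow_ne_zero _ hG0) (pow_ne_zero _ hH0),
      Polynomial.natDegree_pow, Polynomial.natDegree_pow]
  have hBdeg : (toQ G).natDegree = G.natDegree := my_toQ_natDegree G
  have hA0 : Polynomial.C (((b : ℚ) ^ (b + 1))⁻¹) * toQ (G ^ b * H ^ (b + 1)) ≠ 0 := by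
    apply mul_ne_zero
    · exact Polynomial.C_ne_zero.mpr (inv_ne_zero (pow_ne_zero _ hbQ))
    · exact (Polynomial.map_ne_zero_iff (by simpa using Int.cast_injective)).mpr
        (mul_ne_zero (pow_ne_zero _ hG0) (pow_ne_zero _ hH0))
  have hB0 : toQ G ≠ 0 :=
    (Polynomial.map_ne_zero_iff (by simpa using Int.cast_injective)).mpr hG0
  have hAnu : ¬ IsUnit (⟨_, hA⟩ : IntZ) := by
    intro hu
    have := Polynomial.natDegree_eq_zero_of_isUnit (hu.map IntZ.subtype)
    rw [Subring.coe_subtype] at this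
    rw [hAdeg] at this
    nlinarith [hdG, hdH]
  have hBnu : ¬ IsUnit (⟨_, hB⟩ : IntZ) := by
    intro hu
    have := Polynomial.natDegree_eq_zero_of_isUnit (hu.map IntZ.subtype)
    rw [Subring.coe_subtype] at this
    rw [hBdeg] at this
    omega
  -- factor A and B into irreducibles
  obtain ⟨mA, hmA⟩ := my_exists_int_eval_ne_zero _ hA0
  obtain ⟨zA, hzA⟩ := hA mA
  have hzA0 : zA ≠ 0 := by
    rintro rfl
    exact hmA (by rw [hzA]; simp)
  obtain ⟨sA, hsAirr, hsAprod⟩ := my_atomic _ (⟨_, hA⟩ : IntZ) mA zA hzA hzA0 hAnu le_rfl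
  obtain ⟨mB, hmB⟩ := my_exists_int_eval_ne_zero _ hB0
  obtain ⟨zB, hzB⟩ := hB mB
  have hzB0 : zB ≠ 0 := by
    rintro rfl
    exact hmB (by rw [hzB]; simp)
  obtain ⟨sB, hsBirr, hsBprod⟩ := my_atomic _ (⟨_, hB⟩ : IntZ) mB zB hzB hzB0 hBnu le_rfl
  -- apply absolute irreducibility
  have hrel := habs.2 (b + 1) (by omega) (sA + sB)
    (by
      intro a ha
      rcases Multiset.mem_add.mp ha with ha | ha
      · exact hsAirr a ha
      · exact hsBirr a ha)
    (by rw [Multiset.prod_add, hsAprod, hsBprod]; exact hprodEq)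
  obtain ⟨hcard, hall⟩ := Multiset.rel_replicate_right.mp hrel
  -- pick an element of sB
  have hsBne : sB ≠ 0 := by
    intro h0
    rw [h0, Multiset.prod_zero] at hsBprod
    exact hBnu (hsBprod ▸ isUnit_one)
  obtain ⟨x, hx⟩ := Multiset.exists_mem_of_ne_zero hsBne
  have hxassoc : Associated x (⟨_, hf⟩ : IntZ) := hall x (Multiset.mem_add.mpr (Or.inr hx))
  have hxdvd : x ∣ (⟨_, hB⟩ : IntZ) := hsBprod ▸ Multiset.dvd_prod hx
  obtain ⟨c, hc⟩ := hxdvd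
  have hxval_dvd : (x : Polynomial ℚ) ∣ toQ G :=
    ⟨(c : Polynomial ℚ), by
      have h2 := congrArg Subtype.val hc
      rwa [MulMemClass.coe_mul] at h2⟩
  have hdegx_le : (x : Polynomial ℚ).natDegree ≤ G.natDegree := by
    have := Polynomial.natDegree_le_of_dvd hxval_dvd hB0
    rwa [hBdeg] at this
  obtain ⟨uu, huu⟩ := hxassoc
  have hxne : (x : Polynomial ℚ) ≠ 0 := by
    intro h0
    exact (hsBirr x hx).ne_zero (Subtype.ext h0)
  have huuval : IsUnit (((uu : IntZ) : Polynomial ℚ)) := by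
    have : IsUnit (uu : IntZ) := Units.isUnit uu
    have h2 := this.map IntZ.subtype
    rwa [Subring.coe_subtype] at h2
  have hdegF : ((⟨_, hf⟩ : IntZ) : Polynomial ℚ).natDegree = G.natDegree + H.natDegree := by
    show (Polynomial.C ((b : ℚ))⁻¹ * toQ (∏ i, g i)).natDegree = _
    rw [Polynomial.natDegree_C_mul (inv_ne_zero hbQ), my_toQ_natDegree, ← hGH,
      Polynomial.natDegree_mul hG0 hH0]
  have hdegF2 : ((⟨_, hf⟩ : IntZ) : Polynomial ℚ).natDegree = (x : Polynomial ℚ).natDegree := by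
    have hv : ((⟨_, hf⟩ : IntZ) : Polynomial ℚ)
        = (x : Polynomial ℚ) * ((uu : IntZ) : Polynomial ℚ) := by
      exact_mod_cast congrArg Subtype.val huu.symm
    rw [hv, Polynomial.natDegree_mul hxne huuval.ne_zero,
      Polynomial.natDegree_eq_zero_of_isUnit huuval]
    omega
  omega

end
end

section
/- Let I be a nonempty finite set, for each i ∈ I let g_i ∈ Z[x] be primitive and irreducible in Z[x], let p be a prime and n > 1 a natural number, and suppose f = (∏_{i∈I} g_i)/p^n lies in Int(Z) and is irreducible in Int(Z). Suppose there exist a subset J ⊊ I, a partition Z = S ⊎ T of the integers into two nonempty sets, each a union of residue classes modulo p, and an integer e with 1 ≤ e < n, such that: (i) v_p(gcd{∏_{i∈J} g_i(a) : a ∈ S}) > n; (ii) for every residue class t + pZ ⊆ T, v_p(gcd{∏_{i∈J} g_i(b) : b ∈ t + pZ}) = e; and (iii) for every residue class t + pZ ⊆ T, v_p(gcd{∏_{i∈J} g_i(b) : b ∈ t + pZ}) + v_p(gcd{∏_{i∈I∖J} g_i(b) : b ∈ t + pZ}) ≥ n. Then f is not absolutely irreducible in Int(Z). -/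
open Polynomial

noncomputable section

-- units of IntZ
lemma IntZ.val_eq_of_isUnit {u : IntZ} (hu : IsUnit u) :
    (u : ℚ[X]) = C 1 ∨ (u : ℚ[X]) = C (-1) := by
  obtain ⟨v, hv⟩ := hu.exists_right_inv
  have hval : (u : ℚ[X]) * (v : ℚ[X]) = 1 := by exact_mod_cast congrArg Subtype.val hv
  have hUu : IsUnit (u : ℚ[X]) := IsUnit.of_mul_eq_one _ hval
  obtain ⟨r, hr, hCr⟩ := Polynomial.isUnit_iff.mp hUu
  obtain ⟨m, hm⟩ := u.2 0
  have hrm : r = (m : ℚ) := by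
    have := hm
    rw [← hCr] at this
    simpa using this
  -- v is the constant r⁻¹
  have hr0 : r ≠ 0 := hr.ne_zero
  have hvval : (v : ℚ[X]) = C r⁻¹ := by
    have h1 : C r * (v : ℚ[X]) = 1 := by rw [hCr]; exact hval
    have := congrArg (fun q => C r⁻¹ * q) h1
    simp only [← mul_assoc, ← C_mul, inv_mul_cancel₀ hr0, map_one, one_mul, mul_one] at this
    exact this
  obtain ⟨m', hm'⟩ := v.2 0
  have hrm' : r⁻¹ = (m' : ℚ) := by
    have := hm'
    rw [hvval] at this
    simpa using this
  have hmm' : (m : ℚ) * (m' : ℚ) = 1 := by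
    rw [← hrm, ← hrm']
    exact mul_inv_cancel₀ hr0
  have hmm'' : m * m' = 1 := by exact_mod_cast hmm'
  have : m = 1 ∨ m = -1 := Int.isUnit_iff.mp (IsUnit.of_mul_eq_one _ hmm'')
  rcases this with h | h
  · left; rw [← hCr, hrm, h]; norm_num
  · right; rw [← hCr, hrm, h]; norm_num

lemma IntZ.isUnit_of_val {u : IntZ}
    (h : (u : ℚ[X]) = C 1 ∨ (u : ℚ[X]) = C (-1)) : IsUnit u := by
  rcases h with h | h
  · have : u = 1 := Subtype.ext (by simpa using h)
    rw [this]; exact isUnit_one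
  · have : u = -1 := Subtype.ext (by rw [h]; simp)
    rw [this]; exact isUnit_one.neg

lemma IntZ.not_isUnit_of_natDegree {u : IntZ} (h : 1 ≤ (u : ℚ[X]).natDegree) :
    ¬ IsUnit u := by
  intro hu
  rcases IntZ.val_eq_of_isUnit hu with h' | h' <;> rw [h'] at h <;> simp at h

lemma IntZ.exists_eval_ne {h : IntZ} (h0 : (h : ℚ[X]) ≠ 0) :
    ∃ z : ℤ, (h : ℚ[X]).eval (z : ℚ) ≠ 0 := by
  by_contra hc
  push_neg at hc
  apply h0
  apply Polynomial.eq_zero_of_infinite_isRoot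
  have hsub : Set.range ((↑) : ℤ → ℚ) ⊆ {x | (h : ℚ[X]).IsRoot x} := by
    rintro x ⟨z, rfl⟩
    exact hc z
  exact (Set.infinite_range_of_injective (Int.cast_injective (α := ℚ))).mono hsub

open ArithmeticFunction in
lemma IntZ.measure_pos {h : IntZ} (hu : ¬ IsUnit h) {z m : ℤ}
    (hev : (h : ℚ[X]).eval (z : ℚ) = (m : ℚ)) (hm : m ≠ 0) :
    1 ≤ (h : ℚ[X]).natDegree + cardFactors m.natAbs := by
  by_contra hc
  push_neg at hc
  have hdeg : (h : ℚ[X]).natDegree = 0 := by omega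
  have hcf : cardFactors m.natAbs = 0 := by omega
  obtain ⟨c, hc'⟩ := Polynomial.natDegree_eq_zero.mp hdeg
  have hcm : c = (m : ℚ) := by rw [← hc'] at hev; simpa using hev
  have hlen : m.natAbs.primeFactorsList.length = 0 := by
    rw [← ArithmeticFunction.cardFactors_apply]; exact hcf
  have : m.natAbs = 0 ∨ m.natAbs = 1 := by
    rw [← Nat.primeFactorsList_eq_nil]
    exact List.length_eq_zero_iff.mp hlen
  have hna : m.natAbs = 1 := by
    rcases this with h' | h'
    · exact absurd (Int.natAbs_eq_zero.mp h') hm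
    · exact h'
  have : m = 1 ∨ m = -1 := Int.natAbs_eq_iff.mp hna
  apply hu
  apply IntZ.isUnit_of_val
  rcases this with h' | h'
  · left; rw [← hc', hcm, h']; norm_num
  · right; rw [← hc', hcm, h']; norm_num

open ArithmeticFunction in
lemma IntZ.factor_aux :
    ∀ N : ℕ, ∀ h : IntZ, ¬ IsUnit h → ∀ z m : ℤ, (h : ℚ[X]).eval (z : ℚ) = (m : ℚ) → m ≠ 0 →
      (h : ℚ[X]).natDegree + cardFactors m.natAbs ≤ N →
      ∃ s : Multiset IntZ, (∀ a ∈ s, Irreducible a) ∧ s.prod = h := by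
  intro N
  induction N using Nat.strong_induction_on with
  | _ N IH =>
  intro h hu z m hev hm hN
  by_cases hi : Irreducible h
  · exact ⟨{h}, by simpa using hi, by simp⟩
  rw [irreducible_iff] at hi
  push_neg at hi
  obtain ⟨a, b, hab, ha, hb⟩ := hi hu
  obtain ⟨ma, hma⟩ := a.2 z
  obtain ⟨mb, hmb⟩ := b.2 z
  have hvalmul : (h : ℚ[X]) = (a : ℚ[X]) * (b : ℚ[X]) := by
    exact_mod_cast congrArg Subtype.val hab
  have hmab : (m : ℚ) = ((ma * mb : ℤ) : ℚ) := by
    push_cast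
    rw [← hma, ← hmb, ← hev, hvalmul, eval_mul]
  have hm' : m = ma * mb := by exact_mod_cast hmab
  have hma0 : ma ≠ 0 := by rintro rfl; simp at hm'; exact hm hm'
  have hmb0 : mb ≠ 0 := by rintro rfl; simp at hm'; exact hm hm'
  have hav0 : (a : ℚ[X]) ≠ 0 := by
    intro h0; rw [h0] at hma; simp at hma; exact hma0 (by exact_mod_cast hma.symm)
  have hbv0 : (b : ℚ[X]) ≠ 0 := by
    intro h0; rw [h0] at hmb; simp at hmb; exact hmb0 (by exact_mod_cast hmb.symm)
  have hdeg : (h : ℚ[X]).natDegree = (a : ℚ[X]).natDegree + (b : ℚ[X]).natDegree := by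
    rw [hvalmul]; exact Polynomial.natDegree_mul hav0 hbv0
  have hcf : cardFactors m.natAbs = cardFactors ma.natAbs + cardFactors mb.natAbs := by
    rw [hm', Int.natAbs_mul]
    exact ArithmeticFunction.cardFactors_mul (Int.natAbs_ne_zero.mpr hma0)
      (Int.natAbs_ne_zero.mpr hmb0)
  have hpa := IntZ.measure_pos ha hma hma0
  have hpb := IntZ.measure_pos hb hmb hmb0
  set μa := (a : ℚ[X]).natDegree + cardFactors ma.natAbs with hμa
  set μb := (b : ℚ[X]).natDegree + cardFactors mb.natAbs with hμb
  have hsum : μa + μb ≤ N := by omega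
  obtain ⟨sa, hsa1, hsa2⟩ := IH μa (by omega) a ha z ma hma hma0 le_rfl
  obtain ⟨sb, hsb1, hsb2⟩ := IH μb (by omega) b hb z mb hmb hmb0 le_rfl
  refine ⟨sa + sb, ?_, ?_⟩
  · intro x hx
    rcases Multiset.mem_add.mp hx with hx | hx
    · exact hsa1 x hx
    · exact hsb1 x hx
  · rw [Multiset.prod_add, hsa2, hsb2, hab]

lemma IntZ.factor (h : IntZ) (h0 : (h : ℚ[X]) ≠ 0) (hu : ¬ IsUnit h) :
    ∃ s : Multiset IntZ, (∀ a ∈ s, Irreducible a) ∧ s.prod = h := by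
  obtain ⟨z, hz⟩ := IntZ.exists_eval_ne h0
  obtain ⟨m, hm⟩ := h.2 z
  have hm0 : m ≠ 0 := by rintro rfl; rw [hm] at hz; simp at hz
  exact IntZ.factor_aux _ h hu z m hm hm0 le_rfl
lemma assoc_prod_pow {R : Type*} [CommMonoid R] (f : R) :
    ∀ s : Multiset R, (∀ x ∈ s, Associated x f) →
      Associated s.prod (f ^ Multiset.card s) := by
  intro s
  induction s using Multiset.induction_on with
  | empty => intro _; simp
  | cons a s ih =>
    intro hx
    rw [Multiset.prod_cons, Multiset.card_cons, pow_succ']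
    have h1 := hx a (Multiset.mem_cons_self a s)
    have h2 := ih (fun x hxs => hx x (Multiset.mem_cons_of_mem hxs))
    exact Associated.mul_mul h1 h2

lemma mem_IntZ_div {p : ℕ} (hp : 0 < p) (γ : ℕ) (P : Polynomial ℤ)
    (h : ∀ z : ℤ, ((p : ℤ) ^ γ) ∣ P.eval z) :
    Polynomial.C (((p : ℚ) ^ γ))⁻¹ * toQ P ∈ IntZ := by
  intro z
  obtain ⟨m, hm⟩ := h z
  refine ⟨m, ?_⟩
  have hp' : ((p : ℚ)) ^ γ ≠ 0 := pow_ne_zero _ (by exact_mod_cast hp.ne')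
  rw [eval_mul, eval_C, toQ, Polynomial.eval_intCast_map]
  simp only [Int.cast_id, eq_intCast]
  rw [hm]
  push_cast
  field_simp


/-- Lemma `type2i_non-abs`.
Let `f = (∏ i, g i) / p^n` be irreducible in `Int(ℤ)`, `p` prime, `n > 1`. Suppose there
are `J ⊊ I`, a partition `ℤ = S ⊎ T` into nonempty unions of residue classes mod `p`, and
`1 ≤ e < n` such that:
(i)  `v_p(gcd {∏_{i∈J} g i (a)  | a ∈ S}) > n`, i.e. `p^(n+1)` divides all these values;
(ii) for every class `t + pℤ ⊆ T`, `v_p(gcd {∏_{i∈J} g i (b) | b ≡ t (p)}) = e`;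
(iii) for every class `t + pℤ ⊆ T`, the valuation in (ii) plus
      `v_p(gcd {∏_{i∈I∖J} g i (b) | b ≡ t (p)})` is at least `n`, i.e. (given (ii))
      `p^(n-e)` divides all values `∏_{i∈I∖J} g i (b)` for `b ≡ t (p)`.
Then `f` is not absolutely irreducible. -/
theorem stmt3 {ι : Type} [Fintype ι] [Nonempty ι] [DecidableEq ι]
    (g : ι → Polynomial ℤ)
    (hprim : ∀ i, (g i).IsPrimitive) (hirrZ : ∀ i, Irreducible (g i))
    (p : ℕ) (hp : p.Prime) (n : ℕ) (hn : 1 < n)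
    (hf : Polynomial.C (((p : ℚ) ^ n))⁻¹ * toQ (∏ i, g i) ∈ IntZ)
    (hirr : Irreducible (⟨_, hf⟩ : IntZ))
    (J : Finset ι) (hJprop : J ≠ Finset.univ)
    (S T : Set ℤ) (hunion : S ∪ T = Set.univ) (hdisj : S ∩ T = ∅)
    (hSne : S.Nonempty) (hTne : T.Nonempty)
    (hSres : ∀ a ∈ S, ∀ b : ℤ, a ≡ b [ZMOD (p : ℤ)] → b ∈ S)
    (hTres : ∀ a ∈ T, ∀ b : ℤ, a ≡ b [ZMOD (p : ℤ)] → b ∈ T)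
    (e : ℕ) (he1 : 1 ≤ e) (hen : e < n)
    (hS : ∀ a ∈ S, ((p : ℤ) ^ (n + 1)) ∣ (∏ i ∈ J, g i).eval a)
    (hTval : ∀ t ∈ T,
        (∀ b : ℤ, b ≡ t [ZMOD (p : ℤ)] → ((p : ℤ) ^ e) ∣ (∏ i ∈ J, g i).eval b) ∧
        (∃ b : ℤ, b ≡ t [ZMOD (p : ℤ)] ∧ ¬ ((p : ℤ) ^ (e + 1)) ∣ (∏ i ∈ J, g i).eval b))
    (hTsum : ∀ t ∈ T, ∀ b : ℤ, b ≡ t [ZMOD (p : ℤ)] →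
        ((p : ℤ) ^ (n - e)) ∣ (∏ i ∈ Jᶜ, g i).eval b) :
    ¬ AbsolutelyIrreducible (⟨_, hf⟩ : IntZ) := by
  rintro ⟨-, habs⟩
  obtain ⟨d, hd, hd1⟩ : ∃ d, e + d = n ∧ 1 ≤ d := ⟨n - e, by omega, by omega⟩
  set PJ := ∏ i ∈ J, g i with hPJ
  set PC := ∏ i ∈ Jᶜ, g i with hPC
  have hp0 : 0 < p := hp.pos
  have hp2 : (2 : ℤ) ≤ (p : ℤ) := by exact_mod_cast hp.two_le
  have hpQ : ((p : ℚ)) ≠ 0 := by exact_mod_cast hp0.ne'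
  -- basic facts on g
  have hg0 : ∀ i, g i ≠ 0 := fun i => (hirrZ i).ne_zero
  have hgd : ∀ i, 1 ≤ (g i).natDegree := by
    intro i
    by_contra hcon
    push_neg at hcon
    obtain ⟨c, hc⟩ := Polynomial.natDegree_eq_zero.mp (by omega : (g i).natDegree = 0)
    have hcu : IsUnit c := hprim i c ⟨1, by rw [← hc, mul_one]⟩
    exact (hirrZ i).not_isUnit (by rw [← hc]; exact Polynomial.isUnit_C.mpr hcu)
  -- coverage
  have hcover : ∀ z : ℤ, z ∈ S ∨ z ∈ T := by
    intro z
    have := Set.eq_univ_iff_forall.mp hunion z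
    exact this
  -- J nonempty
  obtain ⟨t0, ht0⟩ := hTne
  have hJne : J.Nonempty := by
    rcases Finset.eq_empty_or_nonempty J with h | h
    · exfalso
      have h1 := (hTval t0 ht0).1 t0 (Int.ModEq.refl _)
      rw [hPJ, h, Finset.prod_empty] at h1
      simp only [Polynomial.eval_one] at h1
      have h2 := Int.le_of_dvd one_pos h1
      have h3 : (p : ℤ) ≤ (p : ℤ) ^ e := le_self_pow₀ (by linarith) (by omega)
      linarith
    · exact h
  obtain ⟨j0, hj0⟩ := hJne
  have hJc : ∃ i0, i0 ∈ Jᶜ := by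
    by_contra hc
    push_neg at hc
    exact hJprop (Finset.eq_univ_iff_forall.mpr fun i => by
      by_contra hi
      exact hc i (Finset.mem_compl.mpr hi))
  obtain ⟨i0, hi0⟩ := hJc
  -- divisibility for A
  have hdivA : ∀ z : ℤ, ((p : ℤ)) ^ e ∣ PJ.eval z := by
    intro z
    rcases hcover z with hz | hz
    · exact dvd_trans (pow_dvd_pow _ (by omega)) (hS z hz)
    · exact (hTval z hz).1 z (Int.ModEq.refl _)
  -- divisibility for B
  have hdivB : ∀ z : ℤ, ((p : ℤ)) ^ (d * (n + 1)) ∣ (PJ ^ d * PC ^ (d + 1)).eval z := by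
    intro z
    rw [eval_mul, eval_pow, eval_pow]
    rcases hcover z with hz | hz
    · have h1 : ((p : ℤ) ^ (n + 1)) ^ d ∣ (PJ.eval z) ^ d := pow_dvd_pow_of_dvd (hS z hz) d
      have h2 : (p : ℤ) ^ (d * (n + 1)) = ((p : ℤ) ^ (n + 1)) ^ d := by
        rw [← pow_mul, mul_comm]
      rw [h2]
      exact dvd_mul_of_dvd_left h1 _
    · have h1 : ((p : ℤ) ^ e) ^ d ∣ (PJ.eval z) ^ d :=
        pow_dvd_pow_of_dvd ((hTval z hz).1 z (Int.ModEq.refl _)) d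
      have h2' : ((p : ℤ)) ^ (n - e) ∣ PC.eval z := hTsum z hz z (Int.ModEq.refl _)
      have h2 : ((p : ℤ) ^ (n - e)) ^ (d + 1) ∣ (PC.eval z) ^ (d + 1) :=
        pow_dvd_pow_of_dvd h2' _
      have h3 := mul_dvd_mul h1 h2
      rw [← pow_mul, ← pow_mul, ← pow_add] at h3
      have hne : n - e = d := by omega
      rw [hne] at h3
      have hid : d * (n + 1) = e * d + d * (d + 1) := by rw [← hd]; ring
      rw [hid]
      exact h3
  -- the two factors
  have hmemA : Polynomial.C (((p : ℚ) ^ e))⁻¹ * toQ PJ ∈ IntZ := mem_IntZ_div hp0 e PJ hdivA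
  have hmemB : Polynomial.C (((p : ℚ) ^ (d * (n + 1))))⁻¹ * toQ (PJ ^ d * PC ^ (d + 1)) ∈ IntZ :=
    mem_IntZ_div hp0 _ _ hdivB
  set fA : IntZ := ⟨_, hmemA⟩ with hfA
  set fB : IntZ := ⟨_, hmemB⟩ with hfB
  set F : IntZ := ⟨_, hf⟩ with hF
  -- key product identity
  have hprodJ : PJ * PC = ∏ i, g i := Finset.prod_mul_prod_compl J g
  have hkey : fA * fB = F ^ (d + 1) := by
    apply Subtype.ext
    show (Polynomial.C (((p : ℚ) ^ e))⁻¹ * toQ PJ) *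
        (Polynomial.C (((p : ℚ) ^ (d * (n + 1))))⁻¹ * toQ (PJ ^ d * PC ^ (d + 1)))
        = ((⟨_, hf⟩ : IntZ) : ℚ[X]) ^ (d + 1)
    have hcoe : ((⟨_, hf⟩ : IntZ) : ℚ[X]) = Polynomial.C (((p : ℚ) ^ n))⁻¹ * toQ (∏ i, g i) := rfl
    rw [hcoe, ← hprodJ]
    have h1 : toQ (PJ * PC) = toQ PJ * toQ PC := Polynomial.map_mul _
    have h2 : toQ (PJ ^ d * PC ^ (d + 1)) = (toQ PJ) ^ d * (toQ PC) ^ (d + 1) := by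
      simp [toQ, Polynomial.map_mul, Polynomial.map_pow]
    have hc : Polynomial.C (((p : ℚ) ^ e))⁻¹ * Polynomial.C (((p : ℚ) ^ (d * (n + 1))))⁻¹
        = Polynomial.C (((p : ℚ) ^ n))⁻¹ ^ (d + 1) := by
      rw [← Polynomial.C_mul, ← Polynomial.C_pow]
      congr 1
      rw [← mul_inv, ← inv_pow, ← pow_add, ← pow_mul]
      congr 2
      rw [← hd]; ring
    rw [h1, h2, mul_pow, ← hc]
    ring
  -- nonzero and degree facts
  have hinj : Function.Injective (⇑(Int.castRingHom ℚ)) := fun a b hab => by simpa using hab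
  have hPJ0 : PJ ≠ 0 := Finset.prod_ne_zero_iff.mpr fun i _ => hg0 i
  have hPC0 : PC ≠ 0 := Finset.prod_ne_zero_iff.mpr fun i _ => hg0 i
  have htQJ0 : toQ PJ ≠ 0 := (Polynomial.map_ne_zero_iff hinj).mpr hPJ0
  have htQC0 : toQ PC ≠ 0 := (Polynomial.map_ne_zero_iff hinj).mpr hPC0
  have hce : (((p : ℚ) ^ e))⁻¹ ≠ 0 := inv_ne_zero (pow_ne_zero _ hpQ)
  have hcb : (((p : ℚ) ^ (d * (n + 1))))⁻¹ ≠ 0 := inv_ne_zero (pow_ne_zero _ hpQ)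
  have hcn : (((p : ℚ) ^ n))⁻¹ ≠ 0 := inv_ne_zero (pow_ne_zero _ hpQ)
  set DJ := ∑ i ∈ J, (g i).natDegree with hDJ
  set DC := ∑ i ∈ Jᶜ, (g i).natDegree with hDC
  have hDJ1 : 1 ≤ DJ := le_trans (hgd j0)
    (Finset.single_le_sum (f := fun i => (g i).natDegree) (fun i _ => Nat.zero_le _) hj0)
  have hDC1 : 1 ≤ DC := le_trans (hgd i0)
    (Finset.single_le_sum (f := fun i => (g i).natDegree) (fun i _ => Nat.zero_le _) hi0)
  have hdegtQJ : (toQ PJ).natDegree = DJ := by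
    rw [toQ, natDegree_map_eq_of_injective hinj, hPJ, Polynomial.natDegree_prod _ _ fun i _ => hg0 i]
  have hdegA : (fA : ℚ[X]).natDegree = DJ := by
    show (Polynomial.C (((p : ℚ) ^ e))⁻¹ * toQ PJ).natDegree = DJ
    rw [Polynomial.natDegree_C_mul hce, hdegtQJ]
  have hA0 : (fA : ℚ[X]) ≠ 0 := mul_ne_zero (Polynomial.C_ne_zero.mpr hce) htQJ0
  have hAnu : ¬ IsUnit fA := IntZ.not_isUnit_of_natDegree (by rw [hdegA]; exact hDJ1)
  have hBmul0 : PJ ^ d * PC ^ (d + 1) ≠ 0 := mul_ne_zero (pow_ne_zero _ hPJ0) (pow_ne_zero _ hPC0)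
  have hB0 : (fB : ℚ[X]) ≠ 0 :=
    mul_ne_zero (Polynomial.C_ne_zero.mpr hcb) ((Polynomial.map_ne_zero_iff hinj).mpr hBmul0)
  have hdegB : (fB : ℚ[X]).natDegree = d * DJ + (d + 1) * DC := by
    show (Polynomial.C (((p : ℚ) ^ (d * (n + 1))))⁻¹ * toQ (PJ ^ d * PC ^ (d + 1))).natDegree = _
    rw [Polynomial.natDegree_C_mul hcb, toQ, natDegree_map_eq_of_injective hinj,
      Polynomial.natDegree_mul (pow_ne_zero _ hPJ0) (pow_ne_zero _ hPC0),
      Polynomial.natDegree_pow, Polynomial.natDegree_pow, hPJ, hPC,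
      Polynomial.natDegree_prod _ _ fun i _ => hg0 i,
      Polynomial.natDegree_prod _ _ fun i _ => hg0 i]
  have hBnu : ¬ IsUnit fB := IntZ.not_isUnit_of_natDegree (by rw [hdegB]; nlinarith)
  have hF0 : (F : ℚ[X]) ≠ 0 := by
    show Polynomial.C (((p : ℚ) ^ n))⁻¹ * toQ (∏ i, g i) ≠ 0
    exact mul_ne_zero (Polynomial.C_ne_zero.mpr hcn)
      ((Polynomial.map_ne_zero_iff hinj).mpr (hprodJ ▸ mul_ne_zero hPJ0 hPC0))
  have hdegF : (F : ℚ[X]).natDegree = DJ + DC := by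
    show (Polynomial.C (((p : ℚ) ^ n))⁻¹ * toQ (∏ i, g i)).natDegree = _
    rw [Polynomial.natDegree_C_mul hcn, ← hprodJ, toQ, natDegree_map_eq_of_injective hinj,
      Polynomial.natDegree_mul hPJ0 hPC0, hPJ, hPC,
      Polynomial.natDegree_prod _ _ fun i _ => hg0 i,
      Polynomial.natDegree_prod _ _ fun i _ => hg0 i]
  -- factor into irreducibles
  obtain ⟨sA, hsA1, hsA2⟩ := IntZ.factor fA hA0 hAnu
  obtain ⟨sB, hsB1, hsB2⟩ := IntZ.factor fB hB0 hBnu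
  have hmem : ∀ a ∈ sA + sB, Irreducible a := by
    intro a ha
    rcases Multiset.mem_add.mp ha with h | h
    · exact hsA1 a h
    · exact hsB1 a h
  have hprod : (sA + sB).prod = F ^ (d + 1) := by
    rw [Multiset.prod_add, hsA2, hsB2, hkey]
  have hrel := habs (d + 1) (by omega) (sA + sB) hmem hprod
  have hrel' := Multiset.rel_replicate_right.mp hrel
  have hallA : ∀ x ∈ sA, Associated x F := fun x hx =>
    hrel'.2 x (Multiset.mem_add.mpr (Or.inl hx))
  have hassoc : Associated fA (F ^ Multiset.card sA) := by
    rw [← hsA2]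
    exact assoc_prod_pow F sA hallA
  have hcard1 : 1 ≤ Multiset.card sA := by
    by_contra hc
    push_neg at hc
    have : sA = 0 := Multiset.card_eq_zero.mp (by omega)
    rw [this] at hsA2
    exact hAnu (hsA2 ▸ isUnit_one)
  obtain ⟨u, hu⟩ := hassoc
  -- pass to ℚ[X] and compare degrees
  have huval : ((u : IntZ) : ℚ[X]) = Polynomial.C 1 ∨ ((u : IntZ) : ℚ[X]) = Polynomial.C (-1) :=
    IntZ.val_eq_of_isUnit u.isUnit
  have hu0 : ((u : IntZ) : ℚ[X]) ≠ 0 := by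
    rcases huval with h | h <;> rw [h] <;> simp
  have hudeg : ((u : IntZ) : ℚ[X]).natDegree = 0 := by
    rcases huval with h | h <;> rw [h] <;> simp
  have huv : (fA : ℚ[X]) * ((u : IntZ) : ℚ[X]) = ((F ^ Multiset.card sA : IntZ) : ℚ[X]) := by
    exact_mod_cast congrArg Subtype.val hu
  have hpowcoe : ((F ^ Multiset.card sA : IntZ) : ℚ[X]) = (F : ℚ[X]) ^ Multiset.card sA := by
    push_cast
    ring
  have hdegeq : DJ = Multiset.card sA * (DJ + DC) := by
    have := congrArg Polynomial.natDegree huv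
    rw [Polynomial.natDegree_mul hA0 hu0, hdegA, hudeg, hpowcoe,
      Polynomial.natDegree_pow, hdegF] at this
    omega
  have hge : DJ + DC ≤ Multiset.card sA * (DJ + DC) :=
    Nat.le_mul_of_pos_left _ (by omega)
  omega

end
end

section
/- The polynomial f = x(x^2+3)/2 lies in Int(Z) and is irreducible in Int(Z), the polynomials x^2(x^2+3)/4 and x^2+3 lie in Int(Z) and are irreducible in Int(Z), f^2 = (x^2(x^2+3)/4) · (x^2+3), and this factorization of f^2 is essentially different from f · f; hence f is not absolutely irreducible in Int(Z). -/
open Polynomial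

noncomputable section

/-- `f = x(x²+3)/2`. -/
def f4 : Polynomial ℚ := Polynomial.C ((2 : ℚ))⁻¹ * toQ (X * (X ^ 2 + Polynomial.C 3))

/-- `x²(x²+3)/4`. -/
def g4a : Polynomial ℚ := Polynomial.C ((4 : ℚ))⁻¹ * toQ (X ^ 2 * (X ^ 2 + Polynomial.C 3))

/-- `x²+3`. -/
def g4b : Polynomial ℚ := toQ (X ^ 2 + Polynomial.C 3)

/-- `q = X^2 + 3` over ℚ. -/
def qp : Polynomial ℚ := X ^ 2 + C 3

lemma f4_eq : f4 = C (2⁻¹ : ℚ) * (X * qp) := by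
  simp [f4, toQ, qp, Polynomial.map_mul, Polynomial.map_add, Polynomial.map_pow,
    Polynomial.map_X, Polynomial.map_C]
  norm_cast

lemma g4a_eq : g4a = C (4⁻¹ : ℚ) * (X ^ 2 * qp) := by
  simp [g4a, toQ, qp, Polynomial.map_mul, Polynomial.map_add, Polynomial.map_pow,
    Polynomial.map_X, Polynomial.map_C]
  norm_cast

lemma g4b_eq : g4b = qp := by
  simp [g4b, toQ, qp, Polynomial.map_add, Polynomial.map_pow, Polynomial.map_X, Polynomial.map_C]
  norm_cast

lemma qp_eval (t : ℚ) : qp.eval t = t ^ 2 + 3 := by simp [qp]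
lemma f4_eval (t : ℚ) : f4.eval t = 2⁻¹ * (t * (t ^ 2 + 3)) := by simp [f4_eq, qp]
lemma g4a_eval (t : ℚ) : g4a.eval t = 4⁻¹ * (t ^ 2 * (t ^ 2 + 3)) := by simp [g4a_eq, qp]
lemma g4b_eval (t : ℚ) : g4b.eval t = t ^ 2 + 3 := by simp [g4b_eq, qp]

lemma hf_mem : f4 ∈ IntZ := by
  intro n
  rcases Int.even_or_odd n with ⟨k, hk⟩ | ⟨k, hk⟩
  · exact ⟨k * ((n : ℤ) ^ 2 + 3), by rw [f4_eval]; push_cast [hk]; ring⟩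
  · exact ⟨n * (2 * k ^ 2 + 2 * k + 2), by rw [f4_eval]; push_cast [hk]; ring⟩

lemma ha_mem : g4a ∈ IntZ := by
  intro n
  rcases Int.even_or_odd n with ⟨k, hk⟩ | ⟨k, hk⟩
  · exact ⟨k ^ 2 * ((n : ℤ) ^ 2 + 3), by rw [g4a_eval]; push_cast [hk]; ring⟩
  · exact ⟨n ^ 2 * (k ^ 2 + k + 1), by rw [g4a_eval]; push_cast [hk]; ring⟩

lemma hb_mem : g4b ∈ IntZ := fun n => ⟨n ^ 2 + 3, by rw [g4b_eval]; push_cast; ring⟩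

lemma qp_ne_zero : (qp : Polynomial ℚ) ≠ 0 := by
  intro h
  have := congrArg (Polynomial.eval 0) h
  simp [qp_eval] at this

lemma f4_ne_zero : f4 ≠ 0 := by
  intro h
  have := congrArg (Polynomial.eval 1) h
  rw [f4_eval] at this; norm_num at this

lemma g4a_ne_zero : g4a ≠ 0 := by
  intro h
  have := congrArg (Polynomial.eval 1) h
  rw [g4a_eval] at this; norm_num at this

lemma g4b_ne_zero : g4b ≠ 0 := by
  intro h
  have := congrArg (Polynomial.eval 1) h
  rw [g4b_eval] at this; norm_num at this

lemma f4_natDegree : f4.natDegree = 3 := by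
  rw [f4_eq, qp]; compute_degree!

lemma g4a_natDegree : g4a.natDegree = 4 := by
  rw [g4a_eq, qp]; compute_degree!

lemma g4b_natDegree : g4b.natDegree = 2 := by
  rw [g4b_eq, qp]; compute_degree!


/-- A unit of `IntZ` is `±1` as a polynomial. -/
lemma unit_val {a : IntZ} (h : IsUnit a) : (a : Polynomial ℚ) = 1 ∨ (a : Polynomial ℚ) = -1 := by
  obtain ⟨u, rfl⟩ := h
  have h1 : ((u : IntZ) * ((u⁻¹ : IntZˣ) : IntZ)) = 1 := u.mul_inv
  have hmul : ((u : IntZ) : Polynomial ℚ) * (((u⁻¹ : IntZˣ) : IntZ) : Polynomial ℚ) = 1 :=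
    calc ((u : IntZ) : Polynomial ℚ) * (((u⁻¹ : IntZˣ) : IntZ) : Polynomial ℚ)
        = (((u : IntZ) * ((u⁻¹ : IntZˣ) : IntZ) : IntZ) : Polynomial ℚ) := rfl
      _ = ((1 : IntZ) : Polynomial ℚ) := by rw [h1]
      _ = 1 := rfl
  have hu : IsUnit ((u : IntZ) : Polynomial ℚ) := IsUnit.of_mul_eq_one _ hmul
  obtain ⟨c, hc, hcu⟩ := Polynomial.isUnit_iff.mp hu
  obtain ⟨k, hk⟩ := (u : IntZ).2 0
  obtain ⟨l, hl⟩ := ((u⁻¹ : IntZˣ) : IntZ).2 0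
  have hk' : ((u : IntZ) : Polynomial ℚ).eval 0 = (k : ℚ) := by simpa using hk
  have hl' : (((u⁻¹ : IntZˣ) : IntZ) : Polynomial ℚ).eval 0 = (l : ℚ) := by simpa using hl
  have hc0 : c = (k : ℚ) := by
    rw [← hk', ← hcu]; simp
  have h2 : c * (((u⁻¹ : IntZˣ) : IntZ) : Polynomial ℚ).eval 0 = 1 := by
    have := congrArg (Polynomial.eval 0) hmul
    simpa [← hcu] using this
  rw [hl', hc0] at h2
  have hkl : k * l = 1 := by exact_mod_cast h2
  rcases (Int.isUnit_iff.mp (IsUnit.of_mul_eq_one _ hkl)) with h1 | h1 <;>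
    [left; right] <;> rw [← hcu, hc0, h1] <;> norm_num

lemma unit_of_cast {a : IntZ} {k : ℤ} (hk : k = 1 ∨ k = -1)
    (h : (a : Polynomial ℚ) = C (k : ℚ)) : IsUnit a := by
  rcases hk with rfl | rfl
  · have : a = 1 := Subtype.ext (by simpa using h)
    exact this ▸ isUnit_one
  · have : a = -1 := Subtype.ext (by simpa using h)
    exact this ▸ (isUnit_one.neg)

/-- A degree-0 element of IntZ is an integer constant. -/
lemma const_shape {a : IntZ} (h : (a : Polynomial ℚ).natDegree = 0) :
    ∃ k : ℤ, (a : Polynomial ℚ) = C (k : ℚ) := by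
  obtain ⟨k, hk⟩ := a.2 0
  have hk' : (a : Polynomial ℚ).eval 0 = (k : ℚ) := by simpa using hk
  refine ⟨k, ?_⟩
  have hrep := eq_C_of_natDegree_eq_zero h
  have : (a : Polynomial ℚ).coeff 0 = (k : ℚ) := by
    rw [← hk']
    conv_rhs => rw [hrep]
    simp
  rw [hrep, this]

/-- A degree-1 element of IntZ has integer coefficients. -/
lemma linear_shape {a : IntZ} (h : (a : Polynomial ℚ).natDegree = 1) :
    ∃ d e : ℤ, (d : ℚ) ≠ 0 ∧ (a : Polynomial ℚ) = C (d : ℚ) * X + C (e : ℚ) := by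
  have hrep := eq_X_add_C_of_natDegree_le_one (p := (a : Polynomial ℚ)) (by omega)
  obtain ⟨m0, hm0⟩ := a.2 0
  obtain ⟨m1, hm1⟩ := a.2 1
  have hm0' : (a : Polynomial ℚ).eval 0 = (m0 : ℚ) := by simpa using hm0
  have hm1' : (a : Polynomial ℚ).eval 1 = (m1 : ℚ) := by simpa using hm1
  have he0 : (a : Polynomial ℚ).coeff 0 = (m0 : ℚ) := by
    rw [← hm0']; conv_rhs => rw [hrep]
    simp
  have he1 : (a : Polynomial ℚ).coeff 1 = (m1 : ℚ) - (m0 : ℚ) := by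
    have : (a : Polynomial ℚ).eval 1 = (a : Polynomial ℚ).coeff 1 + (a : Polynomial ℚ).coeff 0 := by
      conv_lhs => rw [hrep]
      simp
    rw [hm1', he0] at this
    linarith
  refine ⟨m1 - m0, m0, ?_, ?_⟩
  · intro h0
    have hc1 : ((m1 : ℚ) - m0) = 0 := by exact_mod_cast h0
    have : (a : Polynomial ℚ).natDegree = 0 := by
      rw [hrep, he1, hc1]
      simp
    omega
  · rw [hrep, he0, he1]
    push_cast
    ring

lemma qp_no_root (t : ℚ) : qp.eval t ≠ 0 := by
  rw [qp_eval]; positivity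

lemma qp_natDegree : qp.natDegree = 2 := by unfold qp; compute_degree!

lemma root_of_natDegree_one {A : Polynomial ℚ} (h : A.natDegree = 1) : ∃ t, A.eval t = 0 := by
  set c1 := A.coeff 1 with hc1def
  set c0 := A.coeff 0 with hc0def
  have hrep : A = C c1 * X + C c0 := eq_X_add_C_of_natDegree_le_one (le_of_eq h)
  have hc : c1 ≠ 0 := by
    have hA0 : A ≠ 0 := fun h0 => by simp [h0] at h
    have := Polynomial.leadingCoeff_ne_zero.mpr hA0
    rwa [Polynomial.leadingCoeff, h] at this
  refine ⟨-c0 / c1, ?_⟩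
  rw [hrep]
  simp only [eval_add, eval_mul, eval_C, eval_X]
  field_simp
  ring

lemma qp_irred : Irreducible qp := by
  constructor
  · intro h
    have := natDegree_eq_zero_of_isUnit h
    rw [qp_natDegree] at this
    omega
  · intro A B hAB
    by_contra hcon
    push_neg at hcon
    obtain ⟨hA, hB⟩ := hcon
    have hA0 : A ≠ 0 := fun h0 => qp_ne_zero (by rw [hAB, h0, zero_mul])
    have hB0 : B ≠ 0 := fun h0 => qp_ne_zero (by rw [hAB, h0, mul_zero])
    have hdeg : A.natDegree + B.natDegree = 2 := by
      rw [← natDegree_mul hA0 hB0, ← hAB, qp_natDegree]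
    have hAne : A.natDegree ≠ 0 := by
      intro h0
      obtain ⟨c, hc⟩ := natDegree_eq_zero.mp h0
      exact hA (hc ▸ isUnit_C.mpr (Ne.isUnit (fun h => hA0 (by rw [← hc, h, map_zero]))))
    have hBne : B.natDegree ≠ 0 := by
      intro h0
      obtain ⟨c, hc⟩ := natDegree_eq_zero.mp h0
      exact hB (hc ▸ isUnit_C.mpr (Ne.isUnit (fun h => hB0 (by rw [← hc, h, map_zero]))))
    have hA1 : A.natDegree = 1 := by omega
    obtain ⟨t, ht⟩ := root_of_natDegree_one hA1
    exact qp_no_root t (by rw [hAB, eval_mul, ht, zero_mul])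

lemma qp_prime : Prime qp := qp_irred.prime

/-- Constant factor case. -/
lemma const_case {a b : IntZ} {r : Polynomial ℚ} (hab : (a : Polynomial ℚ) * b = r)
    (h0 : (a : Polynomial ℚ).natDegree = 0)
    (hdvd : ∀ k : ℤ, (∀ n v : ℤ, r.eval (n : ℚ) = (v : ℚ) → k ∣ v) → (k = 1 ∨ k = -1)) :
    IsUnit a := by
  obtain ⟨k, hk⟩ := const_shape h0
  have hall : ∀ n v : ℤ, r.eval (n : ℚ) = (v : ℚ) → k ∣ v := by
    intro n v hv
    obtain ⟨m, hm⟩ := b.2 n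
    refine ⟨m, ?_⟩
    have : (v : ℚ) = (k : ℚ) * (m : ℚ) := by
      rw [← hv, ← hab, eval_mul, hk, eval_C, hm]
    exact_mod_cast this
  exact unit_of_cast (hdvd k hall) hk

/-- Linear factor case for f4 : impossible. -/
lemma f4_linear_case {a b : IntZ} (hab : (a : Polynomial ℚ) * b = f4)
    (h1 : (a : Polynomial ℚ).natDegree = 1) : False := by
  obtain ⟨d, e, hd, hrep⟩ := linear_shape h1
  obtain ⟨t, htdef⟩ : ∃ t : ℚ, t = -(e : ℚ) / (d : ℚ) := ⟨_, rfl⟩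
  have hat : (a : Polynomial ℚ).eval t = 0 := by
    rw [hrep, htdef]
    simp only [eval_add, eval_mul, eval_C, eval_X]
    field_simp
    ring
  have hft : f4.eval t = 0 := by rw [← hab, eval_mul, hat, zero_mul]
  rw [f4_eval] at hft
  have ht3 : t ^ 2 + 3 ≠ 0 := by positivity
  have ht0 : t = 0 := by
    rcases mul_eq_zero.mp (by linarith : t * (t ^ 2 + 3) = 0) with h | h
    · exact h
    · exact absurd h ht3
  have he : (e : ℚ) = 0 := by
    rw [htdef] at ht0
    rcases div_eq_zero_iff.mp ht0 with h | h
    · linarith [neg_eq_zero.mp h]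
    · exact absurd h hd
  have ha' : (a : Polynomial ℚ) = C (d : ℚ) * X := by rw [hrep, he]; simp
  have hb' : (b : Polynomial ℚ) = C (1 / (2 * (d : ℚ))) * qp := by
    have hX : (C (d : ℚ) * X : Polynomial ℚ) ≠ 0 :=
      mul_ne_zero (fun h => hd (by simpa using congrArg (Polynomial.eval 0) h)) X_ne_zero
    apply mul_left_cancel₀ hX
    have hc : (d : ℚ) * (1 / (2 * (d : ℚ))) = 2⁻¹ := by field_simp
    calc C (d : ℚ) * X * (b : Polynomial ℚ) = f4 := by rw [← ha', hab]
      _ = C (d : ℚ) * X * (C (1 / (2 * (d : ℚ))) * qp) := by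
          rw [f4_eq, ← hc, C_mul]; ring
  obtain ⟨m, hm⟩ := b.2 0
  have hm' : (b : Polynomial ℚ).eval 0 = (m : ℚ) := by simpa using hm
  rw [hb'] at hm'
  simp only [eval_mul, eval_C, qp_eval] at hm'
  have h3 : (3 : ℚ) = 2 * (d : ℚ) * (m : ℚ) := by
    field_simp at hm'
    linarith
  have h3' : (3 : ℤ) = 2 * d * m := by exact_mod_cast h3
  have : (2 : ℤ) ∣ 3 := ⟨d * m, by linear_combination h3'⟩
  norm_num at this

/-- Linear factor case for g4a : impossible. -/
lemma g4a_linear_case {a b : IntZ} (hab : (a : Polynomial ℚ) * b = g4a)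
    (h1 : (a : Polynomial ℚ).natDegree = 1) : False := by
  obtain ⟨d, e, hd, hrep⟩ := linear_shape h1
  obtain ⟨t, htdef⟩ : ∃ t : ℚ, t = -(e : ℚ) / (d : ℚ) := ⟨_, rfl⟩
  have hat : (a : Polynomial ℚ).eval t = 0 := by
    rw [hrep, htdef]
    simp only [eval_add, eval_mul, eval_C, eval_X]
    field_simp
    ring
  have hft : g4a.eval t = 0 := by rw [← hab, eval_mul, hat, zero_mul]
  rw [g4a_eval] at hft
  have ht3 : t ^ 2 + 3 ≠ 0 := by positivity
  have ht0 : t = 0 := by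
    rcases mul_eq_zero.mp (by linarith : t ^ 2 * (t ^ 2 + 3) = 0) with h | h
    · exact pow_eq_zero_iff (by norm_num) |>.mp h
    · exact absurd h ht3
  have he : (e : ℚ) = 0 := by
    rw [htdef] at ht0
    rcases div_eq_zero_iff.mp ht0 with h | h
    · linarith [neg_eq_zero.mp h]
    · exact absurd h hd
  have ha' : (a : Polynomial ℚ) = C (d : ℚ) * X := by rw [hrep, he]; simp
  have hb' : (b : Polynomial ℚ) = C (1 / (4 * (d : ℚ))) * (X * qp) := by
    have hX : (C (d : ℚ) * X : Polynomial ℚ) ≠ 0 :=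
      mul_ne_zero (fun h => hd (by simpa using congrArg (Polynomial.eval 0) h)) X_ne_zero
    apply mul_left_cancel₀ hX
    have hc : (d : ℚ) * (1 / (4 * (d : ℚ))) = 4⁻¹ := by field_simp
    calc C (d : ℚ) * X * (b : Polynomial ℚ) = g4a := by rw [← ha', hab]
      _ = C (d : ℚ) * X * (C (1 / (4 * (d : ℚ))) * (X * qp)) := by
          rw [g4a_eq, ← hc, C_mul]; ring
  obtain ⟨m, hm⟩ := b.2 2
  have hm' : (b : Polynomial ℚ).eval 2 = (m : ℚ) := by simpa using hm
  rw [hb'] at hm'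
  simp only [eval_mul, eval_C, eval_X, qp_eval] at hm'
  have h3 : (14 : ℚ) = 4 * (d : ℚ) * (m : ℚ) := by
    norm_num at hm'
    field_simp at hm'
    linarith
  have h7 : (7 : ℚ) = 2 * ((d : ℚ) * (m : ℚ)) := by linear_combination h3 / 2
  have h7' : (7 : ℤ) = 2 * (d * m) := by exact_mod_cast h7
  have : (2 : ℤ) ∣ 7 := ⟨d * m, h7'⟩
  norm_num at this

/-- Quadratic factor case for g4a where qp divides the first factor : impossible. -/
lemma g4a_quad_case {a b : IntZ} (hab : (a : Polynomial ℚ) * b = g4a)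
    (h2 : (a : Polynomial ℚ).natDegree = 2) (hq : qp ∣ (a : Polynomial ℚ)) : False := by
  obtain ⟨r, hr⟩ := hq
  have ha0 : (a : Polynomial ℚ) ≠ 0 := fun h0 => g4a_ne_zero (by rw [← hab, h0, zero_mul])
  have hr0 : r ≠ 0 := fun h0 => ha0 (by rw [hr, h0, mul_zero])
  have hnr : r.natDegree = 0 := by
    have := natDegree_mul qp_ne_zero hr0
    rw [← hr, h2, qp_natDegree] at this
    omega
  have hrc := eq_C_of_natDegree_eq_zero hnr
  set c : ℚ := r.coeff 0 with hcdef
  -- c is an integer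
  obtain ⟨m0, hm0⟩ := a.2 0
  obtain ⟨m1, hm1⟩ := a.2 1
  have hm0' : (a : Polynomial ℚ).eval 0 = (m0 : ℚ) := by simpa using hm0
  have hm1' : (a : Polynomial ℚ).eval 1 = (m1 : ℚ) := by simpa using hm1
  have hv0 : (3 : ℚ) * c = (m0 : ℚ) := by
    rw [← hm0', hr, hrc, eval_mul, qp_eval, eval_C]; norm_num
  have hv1 : (4 : ℚ) * c = (m1 : ℚ) := by
    rw [← hm1', hr, hrc, eval_mul, qp_eval, eval_C]; norm_num
  have hc_int : c = ((m1 - m0 : ℤ) : ℚ) := by push_cast; linarith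
  -- cancel qp
  have hb' : C c * (b : Polynomial ℚ) = C (4⁻¹ : ℚ) * X ^ 2 := by
    apply mul_left_cancel₀ qp_ne_zero
    calc qp * (C c * (b : Polynomial ℚ)) = (a : Polynomial ℚ) * b := by rw [hr, hrc]; ring
      _ = g4a := hab
      _ = qp * (C (4⁻¹ : ℚ) * X ^ 2) := by rw [g4a_eq]; ring
  obtain ⟨m, hm⟩ := b.2 1
  have hm' : (b : Polynomial ℚ).eval 1 = (m : ℚ) := by simpa using hm
  have hev := congrArg (Polynomial.eval 1) hb'
  simp only [eval_mul, eval_C, eval_pow, eval_X, hm'] at hev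
  rw [hc_int] at hev
  norm_num at hev
  have hq4 : ((m1 : ℚ) - m0) * (m : ℚ) * 4 = 1 := by linear_combination 4 * hev
  have h4 : ((m1 - m0) * m * 4 : ℤ) = 1 := by exact_mod_cast hq4
  have : (4 : ℤ) ∣ 1 := ⟨(m1 - m0) * m, by linear_combination -h4⟩
  norm_num at this

lemma f4_irred : Irreducible (⟨f4, hf_mem⟩ : IntZ) := by
  constructor
  · intro h
    rcases unit_val h with h1 | h1 <;>
    · have h2 := congrArg (Polynomial.eval (1 : ℚ))
        (show f4 = _ from h1)
      rw [f4_eval] at h2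
      norm_num at h2
  · intro a b hab
    have hab' : (a : Polynomial ℚ) * b = f4 := (congrArg Subtype.val hab).symm
    have ha0 : (a : Polynomial ℚ) ≠ 0 := fun h0 => f4_ne_zero (by rw [← hab', h0, zero_mul])
    have hb0 : (b : Polynomial ℚ) ≠ 0 := fun h0 => f4_ne_zero (by rw [← hab', h0, mul_zero])
    have hdeg : (a : Polynomial ℚ).natDegree + (b : Polynomial ℚ).natDegree = 3 := by
      rw [← natDegree_mul ha0 hb0, hab', f4_natDegree]
    have hdvdprop : ∀ k : ℤ, (∀ n v : ℤ, f4.eval (n : ℚ) = (v : ℚ) → k ∣ v) → (k = 1 ∨ k = -1) := by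
      intro k h
      have h2 := h 1 2 (by rw [f4_eval]; push_cast; norm_num)
      have h7 := h 2 7 (by rw [f4_eval]; push_cast; norm_num)
      have hone : k ∣ 1 := by
        have := dvd_sub h7 (Dvd.dvd.mul_left h2 3)
        norm_num at this
        exact this
      exact Int.isUnit_iff.mp (isUnit_of_dvd_one hone)
    rcases (by omega : (a : Polynomial ℚ).natDegree = 0 ∨ (a : Polynomial ℚ).natDegree = 1 ∨
        (b : Polynomial ℚ).natDegree = 1 ∨ (b : Polynomial ℚ).natDegree = 0) with h | h | h | h
    · exact Or.inl (const_case hab' h hdvdprop)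
    · exact (f4_linear_case hab' h).elim
    · exact (f4_linear_case (by rw [mul_comm] at hab'; exact hab') h).elim
    · exact Or.inr (const_case (by rw [mul_comm] at hab'; exact hab') h hdvdprop)

lemma g4a_irred : Irreducible (⟨g4a, ha_mem⟩ : IntZ) := by
  constructor
  · intro h
    rcases unit_val h with h1 | h1 <;>
    · have h2 := congrArg (Polynomial.eval (2 : ℚ)) (show g4a = _ from h1)
      rw [g4a_eval] at h2
      norm_num at h2
  · intro a b hab
    have hab' : (a : Polynomial ℚ) * b = g4a := (congrArg Subtype.val hab).symm
    have ha0 : (a : Polynomial ℚ) ≠ 0 := fun h0 => g4a_ne_zero (by rw [← hab', h0, zero_mul])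
    have hb0 : (b : Polynomial ℚ) ≠ 0 := fun h0 => g4a_ne_zero (by rw [← hab', h0, mul_zero])
    have hdeg : (a : Polynomial ℚ).natDegree + (b : Polynomial ℚ).natDegree = 4 := by
      rw [← natDegree_mul ha0 hb0, hab', g4a_natDegree]
    have hdvdprop : ∀ k : ℤ, (∀ n v : ℤ, g4a.eval (n : ℚ) = (v : ℚ) → k ∣ v) → (k = 1 ∨ k = -1) := by
      intro k h
      have h1 := h 1 1 (by rw [g4a_eval]; push_cast; norm_num)
      exact Int.isUnit_iff.mp (isUnit_of_dvd_one h1)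
    rcases (by omega : (a : Polynomial ℚ).natDegree = 0 ∨ (a : Polynomial ℚ).natDegree = 1 ∨
        ((a : Polynomial ℚ).natDegree = 2 ∧ (b : Polynomial ℚ).natDegree = 2) ∨
        (b : Polynomial ℚ).natDegree = 1 ∨ (b : Polynomial ℚ).natDegree = 0) with h | h | ⟨h, h'⟩ | h | h
    · exact Or.inl (const_case hab' h hdvdprop)
    · exact (g4a_linear_case hab' h).elim
    · have hdvd : qp ∣ (a : Polynomial ℚ) * b := by
        rw [hab']
        exact ⟨C (4⁻¹ : ℚ) * X ^ 2, by rw [g4a_eq]; ring⟩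
      rcases qp_prime.2.2 _ _ hdvd with hqa | hqb
      · exact (g4a_quad_case hab' h hqa).elim
      · exact (g4a_quad_case (by rw [mul_comm] at hab'; exact hab') h' hqb).elim
    · exact (g4a_linear_case (by rw [mul_comm] at hab'; exact hab') h).elim
    · exact Or.inr (const_case (by rw [mul_comm] at hab'; exact hab') h hdvdprop)

lemma g4b_irred : Irreducible (⟨g4b, hb_mem⟩ : IntZ) := by
  constructor
  · intro h
    rcases unit_val h with h1 | h1 <;>
    · have h2 := congrArg (Polynomial.eval (0 : ℚ)) (show g4b = _ from h1)
      rw [g4b_eval] at h2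
      norm_num at h2
  · intro a b hab
    have hab' : (a : Polynomial ℚ) * b = g4b := (congrArg Subtype.val hab).symm
    have ha0 : (a : Polynomial ℚ) ≠ 0 := fun h0 => g4b_ne_zero (by rw [← hab', h0, zero_mul])
    have hb0 : (b : Polynomial ℚ) ≠ 0 := fun h0 => g4b_ne_zero (by rw [← hab', h0, mul_zero])
    have hdeg : (a : Polynomial ℚ).natDegree + (b : Polynomial ℚ).natDegree = 2 := by
      rw [← natDegree_mul ha0 hb0, hab', g4b_natDegree]
    have hdvdprop : ∀ k : ℤ, (∀ n v : ℤ, g4b.eval (n : ℚ) = (v : ℚ) → k ∣ v) → (k = 1 ∨ k = -1) := by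
      intro k h
      have h3 := h 0 3 (by rw [g4b_eval]; push_cast; norm_num)
      have h4 := h 1 4 (by rw [g4b_eval]; push_cast; norm_num)
      have hone : k ∣ 1 := by
        have := dvd_sub h4 h3
        norm_num at this
        exact this
      exact Int.isUnit_iff.mp (isUnit_of_dvd_one hone)
    rcases (by omega : (a : Polynomial ℚ).natDegree = 0 ∨ (a : Polynomial ℚ).natDegree = 1 ∨
        (b : Polynomial ℚ).natDegree = 0) with h | h | h
    · exact Or.inl (const_case hab' h hdvdprop)
    · obtain ⟨t, ht⟩ := root_of_natDegree_one h
      have : g4b.eval t = 0 := by rw [← hab', eval_mul, ht, zero_mul]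
      rw [g4b_eval] at this
      exact absurd this (by positivity)
    · exact Or.inr (const_case (by rw [mul_comm] at hab'; exact hab') h hdvdprop)

lemma sq_eq : (⟨f4, hf_mem⟩ : IntZ) ^ 2 = (⟨g4a, ha_mem⟩ : IntZ) * ⟨g4b, hb_mem⟩ := by
  have h : f4 ^ 2 = g4a * g4b := by
    rw [f4_eq, g4a_eq, g4b_eq]
    ring_nf
    rw [← C_pow]
    norm_num
    ring
  exact Subtype.ext (by push_cast; exact h)

lemma not_same : ¬ EssentiallySame ({⟨g4a, ha_mem⟩, ⟨g4b, hb_mem⟩} : Multiset IntZ)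
    (Multiset.replicate 2 (⟨f4, hf_mem⟩ : IntZ)) := by
  intro h
  rw [EssentiallySame, Multiset.insert_eq_cons] at h
  obtain ⟨bb, t', hassoc, hrel, ht⟩ := Multiset.rel_cons_left.mp h
  have hbf : bb = ⟨f4, hf_mem⟩ :=
    Multiset.eq_of_mem_replicate (by rw [ht]; exact Multiset.mem_cons_self _ _)
  subst hbf
  obtain ⟨u, hu⟩ := hassoc
  have hval : g4a * ((u : IntZ) : Polynomial ℚ) = f4 := congrArg Subtype.val hu
  rcases unit_val u.isUnit with h1 | h1 <;>
  · rw [h1] at hval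
    have h2 := congrArg (Polynomial.eval (1 : ℚ)) hval
    rw [eval_mul, g4a_eval, f4_eval] at h2
    norm_num at h2

lemma not_abs : ¬ AbsolutelyIrreducible (⟨f4, hf_mem⟩ : IntZ) := by
  rintro ⟨-, h⟩
  apply not_same
  apply h 2 one_lt_two
  · intro x hx
    simp only [Multiset.insert_eq_cons, Multiset.mem_cons, Multiset.mem_singleton] at hx
    rcases hx with rfl | rfl
    · exact g4a_irred
    · exact g4b_irred
  · simp only [Multiset.insert_eq_cons, Multiset.prod_cons, Multiset.prod_singleton]
    exact sq_eq.symm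

/-- `f = x(x²+3)/2` is irreducible in `Int(ℤ)`, the polynomials
`x²(x²+3)/4` and `x²+3` are irreducible in `Int(ℤ)`, `f² = (x²(x²+3)/4)·(x²+3)`, and this
factorization is essentially different from `f·f`; hence `f` is not absolutely
irreducible in `Int(ℤ)`. -/
theorem stmt4 :
    ∃ (hf : f4 ∈ IntZ) (ha : g4a ∈ IntZ) (hb : g4b ∈ IntZ),
      Irreducible (⟨f4, hf⟩ : IntZ) ∧
      Irreducible (⟨g4a, ha⟩ : IntZ) ∧
      Irreducible (⟨g4b, hb⟩ : IntZ) ∧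
      (⟨f4, hf⟩ : IntZ) ^ 2 = ⟨g4a, ha⟩ * ⟨g4b, hb⟩ ∧
      ¬ EssentiallySame ({⟨g4a, ha⟩, ⟨g4b, hb⟩} : Multiset IntZ)
          (Multiset.replicate 2 (⟨f4, hf⟩ : IntZ)) ∧
      ¬ AbsolutelyIrreducible (⟨f4, hf⟩ : IntZ) :=
  ⟨hf_mem, ha_mem, hb_mem, f4_irred, g4a_irred, g4b_irred, sq_eq, not_same, not_abs⟩

end
end

section
/- One has fixdiv(x(x−4)(x^2+3)) = (4) = fixdiv(x^2(x^2+3)) = fixdiv((x−4)^2(x^2+3)) as ideals of Z, the polynomials x^2(x^2+3)/4 and (x−4)^2(x^2+3)/4 are irreducible in Int(Z), the polynomial f = x(x−4)(x^2+3)/4 is irreducible in Int(Z), and f^2 = (x^2(x^2+3)/4) · ((x−4)^2(x^2+3)/4) is a factorization of f^2 essentially different from f · f; hence f is not absolutely irreducible in Int(Z). -/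
open Polynomial

noncomputable section

/-- `f = x(x−4)(x²+3)/4`. -/
def f5 : Polynomial ℚ :=
  Polynomial.C ((4 : ℚ))⁻¹ * toQ (X * (X - Polynomial.C 4) * (X ^ 2 + Polynomial.C 3))

/-- `x²(x²+3)/4`. -/
def g5a : Polynomial ℚ :=
  Polynomial.C ((4 : ℚ))⁻¹ * toQ (X ^ 2 * (X ^ 2 + Polynomial.C 3))

/-- `(x−4)²(x²+3)/4`. -/
def g5b : Polynomial ℚ :=
  Polynomial.C ((4 : ℚ))⁻¹ * toQ ((X - Polynomial.C 4) ^ 2 * (X ^ 2 + Polynomial.C 3))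


-- normal forms
lemma f5_eq : f5 = C (4:ℚ)⁻¹ * (X * (X - C 4) * (X ^ 2 + C 3)) := by
  simp [f5, toQ, Polynomial.map_mul, Polynomial.map_sub, Polynomial.map_add, Polynomial.map_pow,
    Polynomial.map_X, Polynomial.map_C]
  norm_cast

lemma g5a_eq : g5a = C (4:ℚ)⁻¹ * (X ^ 2 * (X ^ 2 + C 3)) := by
  simp [g5a, toQ, Polynomial.map_mul, Polynomial.map_add, Polynomial.map_pow,
    Polynomial.map_X, Polynomial.map_C]
  norm_cast

lemma g5b_eq : g5b = C (4:ℚ)⁻¹ * ((X - C 4) ^ 2 * (X ^ 2 + C 3)) := by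
  simp [g5b, toQ, Polynomial.map_mul, Polynomial.map_sub, Polynomial.map_add, Polynomial.map_pow,
    Polynomial.map_X, Polynomial.map_C]
  norm_cast


lemma div4_1 (n : ℤ) : ∃ m : ℤ, n * (n - 4) * (n ^ 2 + 3) = 4 * m := by
  rcases Int.even_or_odd n with ⟨k, rfl⟩ | ⟨k, rfl⟩
  · exact ⟨k * (k - 2) * ((k + k) ^ 2 + 3), by ring⟩
  · exact ⟨(2 * k + 1) * (2 * k - 3) * (k ^ 2 + k + 1), by ring⟩

lemma div4_2 (n : ℤ) : ∃ m : ℤ, n ^ 2 * (n ^ 2 + 3) = 4 * m := by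
  rcases Int.even_or_odd n with ⟨k, rfl⟩ | ⟨k, rfl⟩
  · exact ⟨k ^ 2 * ((k + k) ^ 2 + 3), by ring⟩
  · exact ⟨(2 * k + 1) ^ 2 * (k ^ 2 + k + 1), by ring⟩

lemma div4_3 (n : ℤ) : ∃ m : ℤ, (n - 4) ^ 2 * (n ^ 2 + 3) = 4 * m := by
  rcases Int.even_or_odd n with ⟨k, rfl⟩ | ⟨k, rfl⟩
  · exact ⟨(k - 2) ^ 2 * ((k + k) ^ 2 + 3), by ring⟩
  · exact ⟨(2 * k - 3) ^ 2 * (k ^ 2 + k + 1), by ring⟩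

lemma f5_mem : f5 ∈ IntZ := by
  intro n
  obtain ⟨m, hm⟩ := div4_1 n
  refine ⟨m, ?_⟩
  rw [f5_eq]
  have hq : ((n : ℚ)) * ((n : ℚ) - 4) * ((n : ℚ) ^ 2 + 3) = 4 * (m : ℚ) := by
    exact_mod_cast congrArg (fun z : ℤ => (z : ℚ)) hm
  simp only [eval_mul, eval_C, eval_X, eval_sub, eval_add, eval_pow]
  rw [hq]; ring

lemma g5a_mem : g5a ∈ IntZ := by
  intro n
  obtain ⟨m, hm⟩ := div4_2 n
  refine ⟨m, ?_⟩
  rw [g5a_eq]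
  have hq : ((n : ℚ)) ^ 2 * ((n : ℚ) ^ 2 + 3) = 4 * (m : ℚ) := by
    exact_mod_cast congrArg (fun z : ℤ => (z : ℚ)) hm
  simp only [eval_mul, eval_C, eval_X, eval_sub, eval_add, eval_pow]
  rw [hq]; ring

lemma g5b_mem : g5b ∈ IntZ := by
  intro n
  obtain ⟨m, hm⟩ := div4_3 n
  refine ⟨m, ?_⟩
  rw [g5b_eq]
  have hq : ((n : ℚ) - 4) ^ 2 * ((n : ℚ) ^ 2 + 3) = 4 * (m : ℚ) := by
    exact_mod_cast congrArg (fun z : ℤ => (z : ℚ)) hm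
  simp only [eval_mul, eval_C, eval_X, eval_sub, eval_add, eval_pow]
  rw [hq]; ring

lemma prime_q5 : Prime (X ^ 2 + C 3 : Polynomial ℚ) := by
  rw [← irreducible_iff_prime]
  have hd : (X ^ 2 + C 3 : Polynomial ℚ).natDegree = 2 := by compute_degree!
  rw [Polynomial.irreducible_iff_roots_eq_zero_of_degree_le_three (by rw [hd])
    (by rw [hd]; norm_num)]
  rw [Multiset.eq_zero_iff_forall_notMem]
  intro r hr
  have h0 : (X ^ 2 + C 3 : Polynomial ℚ) ≠ 0 := fun h => by rw [h] at hd; simp at hd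
  rw [mem_roots h0] at hr
  simp only [IsRoot, eval_add, eval_pow, eval_X, eval_C] at hr
  nlinarith [sq_nonneg r, hr]

/-- coercion of product in IntZ -/
lemma val_mul (a b : IntZ) : ((a * b : IntZ) : Polynomial ℚ) = (a : Polynomial ℚ) * b := rfl

lemma isUnit_of_pm_one (a : IntZ) (c : ℚ) (hA : (a : Polynomial ℚ) = C c)
    (hc : c = 1 ∨ c = -1) : IsUnit a := by
  rcases hc with rfl | rfl
  · have : a = 1 := Subtype.ext (by rw [hA]; simp)
    rw [this]; exact isUnit_one
  · have : a = -1 := Subtype.ext (by rw [hA]; simp)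
    rw [this]; exact isUnit_one.neg

lemma not_unit_of_root (a : IntZ) (r : ℚ) (h : ((a : Polynomial ℚ)).eval r = 0) :
    ¬ IsUnit a := by
  rintro ⟨u, rfl⟩
  have h1 : ((u : IntZ) : Polynomial ℚ) * ((u⁻¹ : IntZˣ) : IntZ) = 1 := by
    exact_mod_cast congrArg (Subtype.val) u.mul_inv
  have := congrArg (Polynomial.eval r) h1
  rw [eval_mul, h, zero_mul] at this
  simp at this

/-- a unit of IntZ evaluates to ±1 at integers -/
lemma unit_eval_pm_one (u : IntZˣ) (n : ℤ) :
    ((u : IntZ) : Polynomial ℚ).eval (n : ℚ) = 1 ∨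
    ((u : IntZ) : Polynomial ℚ).eval (n : ℚ) = -1 := by
  have h1 : ((u : IntZ) : Polynomial ℚ) * ((u⁻¹ : IntZˣ) : IntZ) = 1 := by
    exact_mod_cast congrArg (Subtype.val) u.mul_inv
  obtain ⟨m, hm⟩ := (u : IntZ).2 n
  obtain ⟨m', hm'⟩ := ((u⁻¹ : IntZˣ) : IntZ).2 n
  have := congrArg (Polynomial.eval ((n : ℤ) : ℚ)) h1
  rw [eval_mul, hm, hm', eval_one] at this
  have hmm : m * m' = 1 := by exact_mod_cast this
  rcases Int.mul_eq_one_iff_eq_one_or_neg_one.1 hmm with ⟨h, _⟩ | ⟨h, _⟩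
  · left; rw [hm, h]; norm_num
  · right; rw [hm, h]; norm_num

lemma mem_eval {a : IntZ} (n : ℤ) : ∃ m : ℤ, (a : Polynomial ℚ).eval ((n:ℤ) : ℚ) = (m : ℚ) := a.2 n

lemma parity_case {a b : IntZ} {c c' : ℚ} (A B : Polynomial ℚ)
    (ea : (a : Polynomial ℚ) = C c * A) (eb : (b : Polynomial ℚ) = C c' * B)
    (hcc : c * c' = 1/4) (ta tb : ℤ) (va vb : ℤ)
    (hva : A.eval ((ta:ℤ):ℚ) = (va : ℚ)) (hvb : B.eval ((tb:ℤ):ℚ) = (vb : ℚ))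
    (h4 : ¬ (4:ℤ) ∣ va * vb) : False := by
  obtain ⟨m, hm⟩ := mem_eval (a := a) ta
  obtain ⟨m', hm'⟩ := mem_eval (a := b) tb
  rw [ea, eval_mul, eval_C, hva] at hm
  rw [eb, eval_mul, eval_C, hvb] at hm'
  have key : ((va * vb : ℤ) : ℚ) = 4 * ((m:ℚ) * (m':ℚ)) := by
    push_cast
    rw [← hm, ← hm']
    linear_combination (-4 * (va:ℚ) * (vb:ℚ)) * hcc
  have : (va * vb : ℤ) = 4 * (m * m') := by exact_mod_cast key
  exact h4 ⟨m * m', this⟩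

lemma unit_case {a b : IntZ} {c c' : ℚ} (B : Polynomial ℚ)
    (ea : (a : Polynomial ℚ) = C c) (eb : (b : Polynomial ℚ) = C c' * B)
    (hcc : c * c' = 1/4) (t1 t2 : ℤ) (v1 v2 A1 A2 x y : ℤ)
    (hv1 : B.eval ((t1:ℤ):ℚ) = (v1 : ℚ)) (hv2 : B.eval ((t2:ℤ):ℚ) = (v2 : ℚ))
    (h41 : v1 = 4 * A1) (h42 : v2 = 4 * A2) (hxy : x * A1 + y * A2 = 1) : IsUnit a := by
  obtain ⟨m, hm⟩ := mem_eval (a := a) 0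
  rw [ea, eval_C] at hm
  obtain ⟨m1, h1⟩ := mem_eval (a := b) t1
  rw [eb, eval_mul, eval_C, hv1] at h1
  obtain ⟨m2, h2⟩ := mem_eval (a := b) t2
  rw [eb, eval_mul, eval_C, hv2] at h2
  have h41' : ((v1:ℤ):ℚ) = 4 * ((A1:ℤ):ℚ) := by exact_mod_cast h41
  have h42' : ((v2:ℤ):ℚ) = 4 * ((A2:ℤ):ℚ) := by exact_mod_cast h42
  have k1 : (m:ℚ) * m1 = (A1:ℚ) := by
    rw [← hm, ← h1]; linear_combination ((v1:ℚ)) * hcc + (1/4) * h41'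
  have k2 : (m:ℚ) * m2 = (A2:ℚ) := by
    rw [← hm, ← h2]; linear_combination ((v2:ℚ)) * hcc + (1/4) * h42'
  have k1' : m * m1 = A1 := by exact_mod_cast k1
  have k2' : m * m2 = A2 := by exact_mod_cast k2
  have key : m * (x * m1 + y * m2) = 1 := by linear_combination x * k1' + y * k2' + hxy
  rcases Int.isUnit_iff.1 (IsUnit.of_mul_eq_one (a := m) _ key) with h | h
  · exact isUnit_of_pm_one a c ea (Or.inl (by rw [hm, h]; norm_num))
  · exact isUnit_of_pm_one a c ea (Or.inr (by rw [hm, h]; norm_num))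

lemma assoc_pow {p a : Polynomial ℚ} (hp : Prime p) {n : ℕ} (h : a ∣ p ^ n) :
    ∃ (c : ℚ) (i : ℕ), i ≤ n ∧ a = C c * p ^ i := by
  obtain ⟨i, hi, u, hu⟩ := (dvd_prime_pow hp n).1 h
  obtain ⟨r, hr, hC⟩ := Polynomial.isUnit_iff.1 u.isUnit
  have hr0 : r ≠ 0 := hr.ne_zero
  refine ⟨r⁻¹, i, hi, ?_⟩
  have h1 : a * C r = p ^ i := by rw [hC]; exact hu
  rw [← h1, mul_comm (C r⁻¹), mul_assoc, ← C_mul, mul_inv_cancel₀ hr0, C_1, mul_one]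

lemma classify2 {p q a : Polynomial ℚ} (hp : Prime p) (hq : Prime q) {m : ℕ}
    (h : a ∣ p ^ m * q) :
    ∃ (c : ℚ) (i j : ℕ), i ≤ m ∧ j ≤ 1 ∧ a = C c * p ^ i * q ^ j := by
  obtain ⟨a1, a2, h1, h2, rfl⟩ := exists_dvd_and_dvd_of_dvd_mul h
  obtain ⟨c1, i, hi, rfl⟩ := assoc_pow hp h1
  have h2' : a2 ∣ q ^ 1 := by rw [pow_one]; exact h2
  obtain ⟨c2, j, hj, rfl⟩ := assoc_pow hq h2'
  exact ⟨c1 * c2, i, j, hi, hj, by rw [C_mul]; ring⟩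

lemma classify3 {p1 p2 q a : Polynomial ℚ} (hp1 : Prime p1) (hp2 : Prime p2) (hq : Prime q)
    (h : a ∣ p1 * (p2 * q)) :
    ∃ (c : ℚ) (i k j : ℕ), i ≤ 1 ∧ k ≤ 1 ∧ j ≤ 1 ∧ a = C c * p1 ^ i * p2 ^ k * q ^ j := by
  obtain ⟨a1, a23, h1, h2, rfl⟩ := exists_dvd_and_dvd_of_dvd_mul h
  have h1' : a1 ∣ p1 ^ 1 := by rw [pow_one]; exact h1
  obtain ⟨c1, i, hi, rfl⟩ := assoc_pow hp1 h1'
  obtain ⟨c2, k, j, hk, hj, rfl⟩ := classify2 (m := 1) hp2 hq (by simpa using h2)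
  exact ⟨c1 * c2, i, k, j, hi, hk, hj, by rw [C_mul]; ring⟩

set_option maxHeartbeats 1000000 in
lemma g5a_irred : Irreducible (⟨g5a, g5a_mem⟩ : IntZ) := by
  constructor
  · apply not_unit_of_root _ 0
    show g5a.eval 0 = 0
    rw [g5a_eq]; simp
  · rintro a b hab
    have hab' : (a : Polynomial ℚ) * b = g5a := by
      have := congrArg Subtype.val hab; exact this.symm
    have h4 : (C (4:ℚ)) * g5a = X ^ 2 * (X ^ 2 + C 3) := by
      rw [g5a_eq, ← mul_assoc, ← C_mul]; norm_num
    have hdvd_a : (a : Polynomial ℚ) ∣ X ^ 2 * (X ^ 2 + C 3) :=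
      ⟨(b : Polynomial ℚ) * C 4, by rw [← h4, ← hab']; ring⟩
    have hdvd_b : (b : Polynomial ℚ) ∣ X ^ 2 * (X ^ 2 + C 3) :=
      ⟨(a : Polynomial ℚ) * C 4, by rw [← h4, ← hab']; ring⟩
    obtain ⟨c, i, j, hi, hj, ea⟩ := classify2 prime_X prime_q5 hdvd_a
    obtain ⟨c', i', j', hi', hj', eb⟩ := classify2 prime_X prime_q5 hdvd_b
    have heq : (C c * X ^ i * (X ^ 2 + C 3) ^ j) * (C c' * X ^ i' * (X ^ 2 + C 3) ^ j')
        = C (4:ℚ)⁻¹ * (X ^ 2 * (X ^ 2 + C 3)) := by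
      rw [← ea, ← eb, hab', g5a_eq]
    have ea' : (a : Polynomial ℚ) = C c * (X ^ i * (X ^ 2 + C 3) ^ j) := by
      rw [ea, mul_assoc]
    have eb' : (b : Polynomial ℚ) = C c' * (X ^ i' * (X ^ 2 + C 3) ^ j') := by
      rw [eb, mul_assoc]
    clear ea eb hab hab' hdvd_a hdvd_b h4
    interval_cases i <;> interval_cases j <;> interval_cases i' <;> interval_cases j' <;>
    simp only [pow_zero, pow_one, one_mul, mul_one] at ea' eb' <;>
    first
    | (exfalso
       have e1 := congrArg (Polynomial.eval (1:ℚ)) heq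
       have e2 := congrArg (Polynomial.eval (2:ℚ)) heq
       simp only [eval_mul, eval_pow, eval_add, eval_X, eval_C] at e1 e2
       ring_nf at e1 e2
       linarith [e1, e2])
    | (have e0 := congrArg (Polynomial.eval (1:ℚ)) heq
       simp only [eval_mul, eval_pow, eval_add, eval_X, eval_C] at e0
       have hcc : c * c' = 1/4 := by ring_nf at e0 ⊢; linarith [e0]
       have hcc' : c' * c = 1/4 := by linear_combination hcc
       first
       | (refine Or.inl (unit_case _ ea' eb' hcc 1 1 4 4 1 1 1 0 ?_ ?_ ?_ ?_ ?_) <;> norm_num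
          done)
       | (refine Or.inr (unit_case _ eb' ea' hcc' 1 1 4 4 1 1 1 0 ?_ ?_ ?_ ?_ ?_) <;> norm_num
          done)
       | (refine (parity_case _ _ ea' eb' hcc 1 2 1 14 ?_ ?_ ?_).elim <;> norm_num
          done)
       | (refine (parity_case _ _ ea' eb' hcc 1 2 1 7 ?_ ?_ ?_).elim <;> norm_num
          done)
       | (refine (parity_case _ _ ea' eb' hcc 0 1 3 1 ?_ ?_ ?_).elim <;> norm_num
          done)
       | (refine (parity_case _ _ ea' eb' hcc 2 1 14 1 ?_ ?_ ?_).elim <;> norm_num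
          done))

set_option maxHeartbeats 1000000 in
lemma g5b_irred : Irreducible (⟨g5b, g5b_mem⟩ : IntZ) := by
  constructor
  · apply not_unit_of_root _ 4
    show g5b.eval 4 = 0
    rw [g5b_eq]; simp
  · rintro a b hab
    have hab' : (a : Polynomial ℚ) * b = g5b := by
      have := congrArg Subtype.val hab; exact this.symm
    have h4 : (C (4:ℚ)) * g5b = (X - C 4) ^ 2 * (X ^ 2 + C 3) := by
      rw [g5b_eq, ← mul_assoc, ← C_mul]; norm_num
    have hdvd_a : (a : Polynomial ℚ) ∣ (X - C 4) ^ 2 * (X ^ 2 + C 3) :=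
      ⟨(b : Polynomial ℚ) * C 4, by rw [← h4, ← hab']; ring⟩
    have hdvd_b : (b : Polynomial ℚ) ∣ (X - C 4) ^ 2 * (X ^ 2 + C 3) :=
      ⟨(a : Polynomial ℚ) * C 4, by rw [← h4, ← hab']; ring⟩
    obtain ⟨c, i, j, hi, hj, ea⟩ := classify2 (prime_X_sub_C (4:ℚ)) prime_q5 hdvd_a
    obtain ⟨c', i', j', hi', hj', eb⟩ := classify2 (prime_X_sub_C (4:ℚ)) prime_q5 hdvd_b
    have heq : (C c * (X - C 4) ^ i * (X ^ 2 + C 3) ^ j)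
        * (C c' * (X - C 4) ^ i' * (X ^ 2 + C 3) ^ j')
        = C (4:ℚ)⁻¹ * ((X - C 4) ^ 2 * (X ^ 2 + C 3)) := by
      rw [← ea, ← eb, hab', g5b_eq]
    have ea' : (a : Polynomial ℚ) = C c * ((X - C 4) ^ i * (X ^ 2 + C 3) ^ j) := by
      rw [ea, mul_assoc]
    have eb' : (b : Polynomial ℚ) = C c' * ((X - C 4) ^ i' * (X ^ 2 + C 3) ^ j') := by
      rw [eb, mul_assoc]
    clear ea eb hab hab' hdvd_a hdvd_b h4
    interval_cases i <;> interval_cases j <;> interval_cases i' <;> interval_cases j' <;>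
    simp only [pow_zero, pow_one, one_mul, mul_one] at ea' eb' <;>
    first
    | (exfalso
       have e1 := congrArg (Polynomial.eval (3:ℚ)) heq
       have e2 := congrArg (Polynomial.eval (5:ℚ)) heq
       have e3 := congrArg (Polynomial.eval (6:ℚ)) heq
       simp only [eval_mul, eval_pow, eval_add, eval_sub, eval_X, eval_C] at e1 e2 e3
       ring_nf at e1 e2 e3
       linarith [e1, e2, e3])
    | (have e0 := congrArg (Polynomial.eval (3:ℚ)) heq
       simp only [eval_mul, eval_pow, eval_add, eval_sub, eval_X, eval_C] at e0
       have hcc : c * c' = 1/4 := by ring_nf at e0 ⊢; linarith [e0]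
       have hcc' : c' * c = 1/4 := by linear_combination hcc
       first
       | (refine Or.inl (unit_case _ ea' eb' hcc 3 5 12 28 3 7 (-2) 1 ?_ ?_ ?_ ?_ ?_) <;> norm_num
          done)
       | (refine Or.inr (unit_case _ eb' ea' hcc' 3 5 12 28 3 7 (-2) 1 ?_ ?_ ?_ ?_ ?_) <;> norm_num
          done)
       | (refine (parity_case _ _ ea' eb' hcc 5 2 1 (-14) ?_ ?_ ?_).elim <;> norm_num
          done)
       | (refine (parity_case _ _ ea' eb' hcc 6 5 78 1 ?_ ?_ ?_).elim <;> norm_num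
          done)
       | (refine (parity_case _ _ ea' eb' hcc 5 2 1 7 ?_ ?_ ?_).elim <;> norm_num
          done)
       | (refine (parity_case _ _ ea' eb' hcc 0 5 3 1 ?_ ?_ ?_).elim <;> norm_num
          done))

set_option maxHeartbeats 4000000 in
lemma f5_irred : Irreducible (⟨f5, f5_mem⟩ : IntZ) := by
  constructor
  · apply not_unit_of_root _ 0
    show f5.eval 0 = 0
    rw [f5_eq]; simp
  · rintro a b hab
    have hab' : (a : Polynomial ℚ) * b = f5 := by
      have := congrArg Subtype.val hab; exact this.symm
    have h4 : (C (4:ℚ)) * f5 = X * ((X - C 4) * (X ^ 2 + C 3)) := by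
      rw [f5_eq, ← mul_assoc, ← C_mul]; norm_num; ring
    have hdvd_a : (a : Polynomial ℚ) ∣ X * ((X - C 4) * (X ^ 2 + C 3)) :=
      ⟨(b : Polynomial ℚ) * C 4, by rw [← h4, ← hab']; ring⟩
    have hdvd_b : (b : Polynomial ℚ) ∣ X * ((X - C 4) * (X ^ 2 + C 3)) :=
      ⟨(a : Polynomial ℚ) * C 4, by rw [← h4, ← hab']; ring⟩
    obtain ⟨c, i, k, j, hi, hk, hj, ea⟩ :=
      classify3 prime_X (prime_X_sub_C (4:ℚ)) prime_q5 hdvd_a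
    obtain ⟨c', i', k', j', hi', hk', hj', eb⟩ :=
      classify3 prime_X (prime_X_sub_C (4:ℚ)) prime_q5 hdvd_b
    have heq : (C c * X ^ i * (X - C 4) ^ k * (X ^ 2 + C 3) ^ j)
        * (C c' * X ^ i' * (X - C 4) ^ k' * (X ^ 2 + C 3) ^ j')
        = C (4:ℚ)⁻¹ * (X * (X - C 4) * (X ^ 2 + C 3)) := by
      rw [← ea, ← eb, hab', f5_eq]
    have ea' : (a : Polynomial ℚ) = C c * (X ^ i * ((X - C 4) ^ k * (X ^ 2 + C 3) ^ j)) := by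
      rw [ea]; ring
    have eb' : (b : Polynomial ℚ) = C c' * (X ^ i' * ((X - C 4) ^ k' * (X ^ 2 + C 3) ^ j')) := by
      rw [eb]; ring
    clear ea eb hab hab' hdvd_a hdvd_b h4
    interval_cases i <;> interval_cases k <;> interval_cases j <;>
    interval_cases i' <;> interval_cases k' <;> interval_cases j' <;>
    simp only [pow_zero, pow_one, one_mul, mul_one] at ea' eb' <;>
    first
    | (exfalso
       have e1 := congrArg (Polynomial.eval (1:ℚ)) heq
       have e2 := congrArg (Polynomial.eval (5:ℚ)) heq
       simp only [eval_mul, eval_pow, eval_add, eval_sub, eval_X, eval_C] at e1 e2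
       ring_nf at e1 e2
       linarith [e1, e2])
    | (have e0 := congrArg (Polynomial.eval (1:ℚ)) heq
       simp only [eval_mul, eval_pow, eval_add, eval_sub, eval_X, eval_C] at e0
       have hcc : c * c' = 1/4 := by ring_nf at e0 ⊢; linarith [e0]
       have hcc' : c' * c = 1/4 := by linear_combination hcc
       first
       | (refine Or.inl (unit_case _ ea' eb' hcc 1 2 (-12) (-28) (-3) (-7) 2 (-1) ?_ ?_ ?_ ?_ ?_) <;>
           norm_num
          done)
       | (refine Or.inr (unit_case _ eb' ea' hcc' 1 2 (-12) (-28) (-3) (-7) 2 (-1) ?_ ?_ ?_ ?_ ?_) <;>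
           norm_num
          done)
       | (refine (parity_case _ _ ea' eb' hcc 1 2 1 (-14) ?_ ?_ ?_).elim <;> norm_num
          done)
       | (refine (parity_case _ _ ea' eb' hcc 2 1 (-14) 1 ?_ ?_ ?_).elim <;> norm_num
          done)
       | (refine (parity_case _ _ ea' eb' hcc 5 2 1 14 ?_ ?_ ?_).elim <;> norm_num
          done)
       | (refine (parity_case _ _ ea' eb' hcc 2 5 14 1 ?_ ?_ ?_).elim <;> norm_num
          done)
       | (refine (parity_case _ _ ea' eb' hcc 0 1 3 (-3) ?_ ?_ ?_).elim <;> norm_num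
          done)
       | (refine (parity_case _ _ ea' eb' hcc 1 0 (-3) 3 ?_ ?_ ?_).elim <;> norm_num
          done))
lemma fixdiv1 : fixdiv (X * (X - Polynomial.C 4) * (X ^ 2 + Polynomial.C 3)) = Ideal.span {(4 : ℤ)} := by
  apply le_antisymm
  · rw [fixdiv, Ideal.span_le]
    rintro _ ⟨n, rfl⟩
    simp only [SetLike.mem_coe, Ideal.mem_span_singleton, eval_mul, eval_sub, eval_add,
      eval_pow, eval_X, eval_C]
    obtain ⟨m, hm⟩ := div4_1 n
    exact ⟨m, hm⟩
  · rw [Ideal.span_le, Set.singleton_subset_iff]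
    have h1 : ((X * (X - Polynomial.C 4) * (X ^ 2 + Polynomial.C 3) : Polynomial ℤ)).eval 1 ∈
        fixdiv (X * (X - Polynomial.C 4) * (X ^ 2 + Polynomial.C 3)) :=
      Ideal.subset_span ⟨1, rfl⟩
    have h2 : ((X * (X - Polynomial.C 4) * (X ^ 2 + Polynomial.C 3) : Polynomial ℤ)).eval 2 ∈
        fixdiv (X * (X - Polynomial.C 4) * (X ^ 2 + Polynomial.C 3)) :=
      Ideal.subset_span ⟨2, rfl⟩
    simp only [eval_mul, eval_sub, eval_add, eval_pow, eval_X, eval_C] at h1 h2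
    norm_num at h1 h2
    have h3 := sub_mem h2 (Ideal.mul_mem_left _ 2 h1)
    norm_num at h3
    exact h3

lemma fixdiv2 : fixdiv (X ^ 2 * (X ^ 2 + Polynomial.C 3)) = Ideal.span {(4 : ℤ)} := by
  apply le_antisymm
  · rw [fixdiv, Ideal.span_le]
    rintro _ ⟨n, rfl⟩
    simp only [SetLike.mem_coe, Ideal.mem_span_singleton, eval_mul, eval_add,
      eval_pow, eval_X, eval_C]
    obtain ⟨m, hm⟩ := div4_2 n
    exact ⟨m, hm⟩
  · rw [Ideal.span_le, Set.singleton_subset_iff]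
    have h1 : ((X ^ 2 * (X ^ 2 + Polynomial.C 3) : Polynomial ℤ)).eval 1 ∈
        fixdiv (X ^ 2 * (X ^ 2 + Polynomial.C 3)) := Ideal.subset_span ⟨1, rfl⟩
    norm_num at h1
    exact h1

lemma fixdiv3 : fixdiv ((X - Polynomial.C 4) ^ 2 * (X ^ 2 + Polynomial.C 3)) = Ideal.span {(4 : ℤ)} := by
  apply le_antisymm
  · rw [fixdiv, Ideal.span_le]
    rintro _ ⟨n, rfl⟩
    simp only [SetLike.mem_coe, Ideal.mem_span_singleton, eval_mul, eval_sub, eval_add,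
      eval_pow, eval_X, eval_C]
    obtain ⟨m, hm⟩ := div4_3 n
    exact ⟨m, hm⟩
  · rw [Ideal.span_le, Set.singleton_subset_iff]
    have h1 : (((X - Polynomial.C 4) ^ 2 * (X ^ 2 + Polynomial.C 3) : Polynomial ℤ)).eval 3 ∈
        fixdiv ((X - Polynomial.C 4) ^ 2 * (X ^ 2 + Polynomial.C 3)) := Ideal.subset_span ⟨3, rfl⟩
    have h2 : (((X - Polynomial.C 4) ^ 2 * (X ^ 2 + Polynomial.C 3) : Polynomial ℤ)).eval 5 ∈
        fixdiv ((X - Polynomial.C 4) ^ 2 * (X ^ 2 + Polynomial.C 3)) := Ideal.subset_span ⟨5, rfl⟩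
    norm_num at h1 h2
    have h3 := sub_mem h2 (Ideal.mul_mem_left _ 2 h1)
    norm_num at h3
    exact h3

lemma prod_eq : (⟨f5, f5_mem⟩ : IntZ) ^ 2 = ⟨g5a, g5a_mem⟩ * ⟨g5b, g5b_mem⟩ := by
  apply Subtype.ext
  show f5 ^ 2 = g5a * g5b
  rw [f5_eq, g5a_eq, g5b_eq]; ring

lemma not_ess : ¬ EssentiallySame ({⟨g5a, g5a_mem⟩, ⟨g5b, g5b_mem⟩} : Multiset IntZ)
    (Multiset.replicate 2 (⟨f5, f5_mem⟩ : IntZ)) := by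
  intro h
  rw [EssentiallySame, Multiset.rel_replicate_right] at h
  obtain ⟨u, hu⟩ := h.2 _ (Multiset.mem_cons_self _ _)
  have h1 : (((⟨g5a, g5a_mem⟩ * (u : IntZ) : IntZ)) : Polynomial ℚ).eval 1
      = ((⟨f5, f5_mem⟩ : IntZ) : Polynomial ℚ).eval 1 := by rw [hu]
  have hmul : (((⟨g5a, g5a_mem⟩ * (u : IntZ) : IntZ)) : Polynomial ℚ)
      = g5a * ((u : IntZ) : Polynomial ℚ) := rfl
  rw [hmul, eval_mul] at h1
  have hg : g5a.eval 1 = 1 := by rw [g5a_eq]; norm_num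
  have hf : (((⟨f5, f5_mem⟩ : IntZ)) : Polynomial ℚ).eval 1 = -3 := by
    show f5.eval 1 = -3
    rw [f5_eq]; norm_num
  rw [hg, one_mul, hf] at h1
  rcases unit_eval_pm_one u 1 with h2 | h2 <;>
    rw [show ((1:ℤ):ℚ) = (1:ℚ) by norm_num] at h2 <;> rw [h2] at h1 <;> norm_num at h1

lemma not_abs_s5 : ¬ AbsolutelyIrreducible (⟨f5, f5_mem⟩ : IntZ) := by
  rintro ⟨-, h⟩
  apply not_ess
  apply h 2 one_lt_two
  · rintro x hx
    rcases Multiset.mem_cons.1 hx with rfl | hx'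
    · exact g5a_irred
    · rw [Multiset.mem_singleton] at hx'
      subst hx'
      exact g5b_irred
  · simp only [Multiset.insert_eq_cons, Multiset.prod_cons, Multiset.prod_singleton]
    exact prod_eq.symm

/-- `fixdiv(x(x−4)(x²+3)) = (4) = fixdiv(x²(x²+3)) = fixdiv((x−4)²(x²+3))`,
the polynomials `x²(x²+3)/4` and `(x−4)²(x²+3)/4` are irreducible in `Int(ℤ)`,
`f = x(x−4)(x²+3)/4` is irreducible in `Int(ℤ)`, and
`f² = (x²(x²+3)/4)·((x−4)²(x²+3)/4)` is a factorization essentially different from `f·f`;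
hence `f` is not absolutely irreducible in `Int(ℤ)`. -/
theorem stmt5 :
    fixdiv (X * (X - Polynomial.C 4) * (X ^ 2 + Polynomial.C 3)) = Ideal.span {(4 : ℤ)} ∧
    fixdiv (X ^ 2 * (X ^ 2 + Polynomial.C 3)) = Ideal.span {(4 : ℤ)} ∧
    fixdiv ((X - Polynomial.C 4) ^ 2 * (X ^ 2 + Polynomial.C 3)) = Ideal.span {(4 : ℤ)} ∧
    ∃ (hf : f5 ∈ IntZ) (ha : g5a ∈ IntZ) (hb : g5b ∈ IntZ),
      Irreducible (⟨g5a, ha⟩ : IntZ) ∧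
      Irreducible (⟨g5b, hb⟩ : IntZ) ∧
      Irreducible (⟨f5, hf⟩ : IntZ) ∧
      (⟨f5, hf⟩ : IntZ) ^ 2 = ⟨g5a, ha⟩ * ⟨g5b, hb⟩ ∧
      ¬ EssentiallySame ({⟨g5a, ha⟩, ⟨g5b, hb⟩} : Multiset IntZ)
          (Multiset.replicate 2 (⟨f5, hf⟩ : IntZ)) ∧
      ¬ AbsolutelyIrreducible (⟨f5, hf⟩ : IntZ) := by
  exact ⟨fixdiv1, fixdiv2, fixdiv3, f5_mem, g5a_mem, g5b_mem, g5a_irred, g5b_irred, f5_irred,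
    prod_eq, not_ess, not_abs_s5⟩

end
end

section
/- Let p be an odd prime, n > 1 a natural number, and q a prime with q ≡ 1 (mod p^{n+1}). If r is an integer whose residue class generates the group of units of Z/p^{n+1}Z, then v_p(r^{p^{n-1}(p-1)} − q) = n. Consequently, the minimum of v_p(u^{p^{n-1}(p-1)} − q) over all integers u not divisible by p is exactly n. -/
open Polynomial

noncomputable section

/-- Let `p` be an odd prime, `n > 1`, and `q` a prime with
`q ≡ 1 (mod p^(n+1))`. If `r` is an integer whose residue class generates the group of
units of `ℤ/p^(n+1)ℤ`, then `v_p(r^(p^(n-1)(p-1)) − q) = n`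
(i.e. `p^n` divides it but `p^(n+1)` does not). Consequently, the minimum of
`v_p(u^(p^(n-1)(p-1)) − q)` over integers `u` not divisible by `p` is exactly `n`
(i.e. `p^n` divides all such values and for some such `u`, `p^(n+1)` does not divide it). -/
theorem stmt7 (p : ℕ) (hp : p.Prime) (hp2 : p ≠ 2)
    (n : ℕ) (hn : 1 < n)
    (q : ℕ) (hq : q.Prime) (hq1 : (q : ℤ) ≡ 1 [ZMOD ((p : ℤ) ^ (n + 1))])
    (r : ℤ)
    (hr : ∀ u : (ZMod (p ^ (n + 1)))ˣ, ∃ k : ℕ,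
        (u : ZMod (p ^ (n + 1))) = ((r : ZMod (p ^ (n + 1)))) ^ k) :
    (((p : ℤ) ^ n ∣ r ^ (p ^ (n - 1) * (p - 1)) - (q : ℤ)) ∧
      ¬ ((p : ℤ) ^ (n + 1) ∣ r ^ (p ^ (n - 1) * (p - 1)) - (q : ℤ))) ∧
    (∀ u : ℤ, ¬ ((p : ℤ) ∣ u) →
      ((p : ℤ) ^ n ∣ u ^ (p ^ (n - 1) * (p - 1)) - (q : ℤ))) ∧
    (∃ u : ℤ, ¬ ((p : ℤ) ∣ u) ∧
      ¬ ((p : ℤ) ^ (n + 1) ∣ u ^ (p ^ (n - 1) * (p - 1)) - (q : ℤ))) := by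
  have hp1 : 1 < p := hp.one_lt
  set m := p ^ (n - 1) * (p - 1) with hm
  have hqd : ((p : ℤ)) ^ (n + 1) ∣ (q : ℤ) - 1 := Int.ModEq.dvd hq1.symm
  -- Part 2: for all u coprime to p
  have key : ∀ u : ℤ, ¬ ((p : ℤ) ∣ u) → ((p : ℤ)) ^ n ∣ u ^ m - (q : ℤ) := by
    intro u hu
    haveI : NeZero (p ^ n) := ⟨pow_ne_zero _ (by omega)⟩
    have hcopn : Nat.Coprime p u.natAbs :=
      (Nat.Prime.coprime_iff_not_dvd hp).2 (fun h => hu (Int.natCast_dvd.mpr h))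
    have hcop : IsCoprime ((p : ℤ) ^ n) u := by
      have h1 : IsCoprime (p : ℤ) u := Int.isCoprime_iff_gcd_eq_one.mpr (by
        simpa [Int.gcd] using hcopn)
      exact h1.pow_left
    obtain ⟨a, b, hab⟩ := hcop
    have hpz : (((p : ℤ) ^ n : ℤ) : ZMod (p ^ n)) = 0 := by
      have h0 : ((p ^ n : ℕ) : ZMod (p ^ n)) = 0 := ZMod.natCast_self _
      exact_mod_cast h0
    have hmul : ((b : ℤ) : ZMod (p ^ n)) * ((u : ℤ) : ZMod (p ^ n)) = 1 := by
      have h := congrArg (fun z : ℤ => (z : ZMod (p ^ n))) hab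
      simp only [Int.cast_add, Int.cast_mul, Int.cast_one] at h
      rw [hpz] at h
      rw [mul_zero, zero_add] at h
      exact h
    have hunit : IsUnit ((u : ℤ) : ZMod (p ^ n)) :=
      IsUnit.of_mul_eq_one _ (by rw [mul_comm] at hmul; exact hmul)
    have htot : ((u : ℤ) : ZMod (p ^ n)) ^ Nat.totient (p ^ n) = 1 := by
      have h := congrArg (Units.val) (ZMod.pow_totient hunit.unit)
      simp only [Units.val_pow_eq_pow_val, IsUnit.unit_spec, Units.val_one] at h
      exact h
    have htotval : Nat.totient (p ^ n) = m := Nat.totient_prime_pow hp (by omega)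
    have hd : ((p ^ n : ℕ) : ℤ) ∣ (q : ℤ) - 1 := by
      push_cast
      exact dvd_trans (pow_dvd_pow _ (by omega)) hqd
    have hq1' : ((q : ℤ) : ZMod (p ^ n)) = 1 := by
      have hz := (ZMod.intCast_zmod_eq_zero_iff_dvd ((q : ℤ) - 1) (p ^ n)).mpr hd
      rw [Int.cast_sub, Int.cast_one, sub_eq_zero] at hz
      exact hz
    have hz : ((u ^ m - (q : ℤ) : ℤ) : ZMod (p ^ n)) = 0 := by
      rw [Int.cast_sub, Int.cast_pow, ← htotval, htot, hq1', sub_self]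
    have hres := (ZMod.intCast_zmod_eq_zero_iff_dvd (u ^ m - (q : ℤ)) (p ^ n)).mp hz
    push_cast at hres
    exact hres
  -- Part 1: r
  haveI : NeZero (p ^ (n + 1)) := ⟨pow_ne_zero _ (by omega)⟩
  haveI : Fact (2 < p ^ (n + 1)) := ⟨by
    calc 2 < p := by omega
    _ ≤ p ^ (n + 1) := Nat.le_self_pow (by omega) p⟩
  haveI : Fact (1 < p ^ (n + 1)) := ⟨by have := Fact.out (p := 2 < p ^ (n + 1)); omega⟩
  have hrunit : IsUnit ((r : ℤ) : ZMod (p ^ (n + 1))) := by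
    obtain ⟨k, hk⟩ := hr (-1)
    have hne : ((-1 : (ZMod (p ^ (n + 1)))ˣ) : ZMod (p ^ (n + 1))) = -1 := by simp
    rw [hne] at hk
    rcases Nat.eq_zero_or_pos k with hk0 | hk0
    · exfalso
      rw [hk0, pow_zero] at hk
      exact ZMod.neg_one_ne_one hk
    · have hknu : IsUnit (((r : ℤ) : ZMod (p ^ (n + 1))) ^ k) := by
        rw [← hk]
        exact isUnit_one.neg
      exact (isUnit_pow_iff hk0.ne').mp hknu
  set ru := hrunit.unit with hru
  have hruval : (ru : ZMod (p ^ (n + 1))) = ((r : ℤ) : ZMod (p ^ (n + 1))) := rfl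
  have hgen : ∀ u : (ZMod (p ^ (n + 1)))ˣ, u ∈ Subgroup.zpowers ru := by
    intro u
    obtain ⟨k, hk⟩ := hr u
    refine ⟨(k : ℤ), ?_⟩
    show ru ^ (k : ℤ) = u
    rw [zpow_natCast]
    apply Units.ext
    rw [Units.val_pow_eq_pow_val, hruval, ← hk]
  have hord : orderOf ru = Nat.card (ZMod (p ^ (n + 1)))ˣ :=
    orderOf_eq_card_of_forall_mem_zpowers hgen
  have hcard : Nat.card (ZMod (p ^ (n + 1)))ˣ = p ^ n * (p - 1) := by
    rw [Nat.card_eq_fintype_card, ZMod.card_units_eq_totient]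
    rw [Nat.totient_prime_pow hp (by omega)]
    simp
  have hpow_ne : ((r : ℤ) : ZMod (p ^ (n + 1))) ^ m ≠ 1 := by
    intro h
    have h1 : ru ^ m = 1 := by
      apply Units.ext
      rw [Units.val_pow_eq_pow_val, hruval, h, Units.val_one]
    have hdvd : orderOf ru ∣ m := orderOf_dvd_of_pow_eq_one h1
    rw [hord, hcard] at hdvd
    have hmpos : 0 < m := Nat.mul_pos (Nat.pow_pos (by omega)) (by omega)
    have hle := Nat.le_of_dvd hmpos hdvd
    have hlt : p ^ (n - 1) < p ^ n := Nat.pow_lt_pow_right hp1 (by omega)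
    have : p ^ (n - 1) * (p - 1) < p ^ n * (p - 1) :=
      (Nat.mul_lt_mul_right (show 0 < p - 1 by omega)).mpr hlt
    omega
  have hdq : ((p ^ (n + 1) : ℕ) : ℤ) ∣ (q : ℤ) - 1 := by push_cast; exact hqd
  have hq1'' : ((q : ℤ) : ZMod (p ^ (n + 1))) = 1 := by
    have hz := (ZMod.intCast_zmod_eq_zero_iff_dvd ((q : ℤ) - 1) (p ^ (n + 1))).mpr hdq
    rw [Int.cast_sub, Int.cast_one, sub_eq_zero] at hz
    exact hz
  have hnot : ¬ ((p : ℤ) ^ (n + 1) ∣ r ^ m - (q : ℤ)) := by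
    intro h
    have hd : ((p ^ (n + 1) : ℕ) : ℤ) ∣ r ^ m - (q : ℤ) := by push_cast; exact h
    have hz := (ZMod.intCast_zmod_eq_zero_iff_dvd (r ^ m - (q : ℤ)) (p ^ (n + 1))).mpr hd
    rw [Int.cast_sub, Int.cast_pow, hq1'', sub_eq_zero] at hz
    exact hpow_ne hz
  have hpr : ¬ ((p : ℤ) ∣ r) := by
    intro h
    haveI : Fact p.Prime := ⟨hp⟩
    have h0 : ((r : ℤ) : ZMod p) = 0 := by
      have hh : (((p : ℕ) : ℤ)) ∣ r := by push_cast; exact h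
      exact (ZMod.intCast_zmod_eq_zero_iff_dvd r p).mpr hh
    have hmap : IsUnit ((r : ℤ) : ZMod p) := by
      have := hrunit.map (ZMod.castHom (dvd_pow_self p (Nat.succ_ne_zero n)) (ZMod p))
      simpa using this
    rw [h0] at hmap
    exact not_isUnit_zero hmap
  exact ⟨⟨key r hpr, hnot⟩, key, ⟨r, hpr, hnot⟩⟩

end
end

section
/- Let p be an odd prime, n > 1 a natural number, q a prime with q ≡ 1 (mod p^{n+1}) and q > p^{n-1}(p-1) + n, and set h(x) = x^{p^{n-1}(p-1)} − q. Let a_1, …, a_n be integers, each divisible by p, whose residue classes modulo p^2 do not cover all residue classes modulo p^2 that are divisible by p, and such that no a_i is divisible by any prime l ≤ p^{n-1}(p-1) + n with l ≠ p. Then f(x) = h(x)·∏_{i=1}^n (x − a_i) / p^n lies in Int(Z) and is irreducible in Int(Z). -/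
open Polynomial

noncomputable section

/-- `h(x) = x^(p^(n-1)(p-1)) − q` over `ℤ`. -/
def hpoly (p n q : ℕ) : Polynomial ℤ :=
  X ^ (p ^ (n - 1) * (p - 1)) - Polynomial.C (q : ℤ)

/-- `f(x) = h(x)·∏_{i=1}^n (x − a_i) / p^n` over `ℚ`
(the `n` integers being `a 0, …, a (n-1)`). -/
def fpoly (p n q : ℕ) (a : ℕ → ℤ) : Polynomial ℚ :=
  Polynomial.C (((p : ℚ) ^ n))⁻¹ *
    toQ (hpoly p n q * ∏ i ∈ Finset.range n, (X - Polynomial.C (a i)))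

lemma aux_padic_prod (p : ℕ) [hp : Fact p.Prime] (s : Multiset ℚ)
    (h : ∀ x ∈ s, x ≠ 0) :
    padicValRat p s.prod = (s.map (padicValRat p)).sum := by
  induction s using Multiset.induction with
  | empty => simp
  | cons a s ih =>
    have ha : a ≠ 0 := h a (Multiset.mem_cons_self a s)
    have hs : ∀ x ∈ s, x ≠ 0 := fun x hx => h x (Multiset.mem_cons_of_mem hx)
    have hsp : s.prod ≠ 0 := Multiset.prod_ne_zero (fun h0 => (hs 0 h0) rfl)
    rw [Multiset.prod_cons, padicValRat.mul ha hsp, ih hs, Multiset.map_cons,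
      Multiset.sum_cons]

lemma aux_hpoly_irred (p n q : ℕ) (hp : p.Prime) (hn : 1 < n)
    (hq : q.Prime) : Irreducible (toQ (hpoly p n q)) := by
  have hm1 : p ^ (n-1) * (p-1) ≠ 0 := by
    have h2 := hp.two_le
    have h3 : 0 < p ^ (n-1) := Nat.pow_pos (by omega)
    have h4 : 0 < p - 1 := by omega
    positivity
  have hmonic : (hpoly p n q).Monic := monic_X_pow_sub_C _ hm1
  have hdeg : (hpoly p n q).natDegree = p ^ (n-1) * (p-1) := natDegree_X_pow_sub_C
  have hqZ : Prime (q : ℤ) := Nat.prime_iff_prime_int.mp hq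
  have hcoeff : ∀ k, (hpoly p n q).coeff k =
      (if k = p ^ (n-1) * (p-1) then 1 else 0) - (if k = 0 then (q:ℤ) else 0) := by
    intro k
    simp [hpoly, coeff_sub, coeff_X_pow, coeff_C]
  have hirrZ : Irreducible (hpoly p n q) := by
    refine Polynomial.IsEisensteinAt.irreducible
      (𝓟 := Ideal.span {(q : ℤ)}) ?_ ?_ hmonic.isPrimitive ?_
    · constructor
      · rw [hmonic.leadingCoeff, Ideal.mem_span_singleton]
        exact fun hd => hq.one_lt.ne' (by exact_mod_cast Int.eq_one_of_dvd_one (by norm_num) hd)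
      · intro k hk
        rw [hdeg] at hk
        rw [hcoeff k, if_neg hk.ne, Ideal.mem_span_singleton]
        split <;> simp
      · rw [hcoeff 0, if_neg (by omega), if_pos rfl, zero_sub, Ideal.span_singleton_pow,
          Ideal.mem_span_singleton]
        intro hd
        have h2 : (q:ℤ)^2 ∣ (q:ℤ) := (dvd_neg.mp hd)
        have h3 : (q:ℤ) * (q:ℤ) ∣ (q:ℤ) * 1 := by rw [mul_one]; rw [sq] at h2; exact h2
        have h4 : (q:ℤ) ∣ 1 := (mul_dvd_mul_iff_left hqZ.ne_zero).mp h3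
        exact hq.one_lt.ne' (by exact_mod_cast Int.eq_one_of_dvd_one (by norm_num) h4)
    · exact (Ideal.span_singleton_prime hqZ.ne_zero).2 hqZ
    · rw [hdeg]; omega
  rw [toQ, ← algebraMap_int_eq]
  exact (hmonic.isPrimitive.irreducible_iff_irreducible_map_fraction_map).1 hirrZ


lemma aux_vals (p n q : ℕ) (hp : p.Prime) (hn : 1 < n)
    (hq1 : (q : ℤ) ≡ 1 [ZMOD ((p : ℤ) ^ (n + 1))])
    (a : ℕ → ℤ) (ha : ∀ i < n, (p : ℤ) ∣ a i) (x : ℤ) :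
    (p:ℤ)^n ∣ (hpoly p n q * ∏ i ∈ Finset.range n, (X - Polynomial.C (a i))).eval x := by
  rw [eval_mul]
  by_cases hx : (p:ℤ) ∣ x
  · refine Dvd.dvd.mul_left ?_ _
    rw [eval_prod]
    simp only [eval_sub, eval_X, eval_C]
    have hpn : (p:ℤ)^n = ∏ _i ∈ Finset.range n, (p:ℤ) := by
      rw [Finset.prod_const, Finset.card_range]
    rw [hpn]
    exact Finset.prod_dvd_prod_of_dvd _ _ (fun i hi => dvd_sub hx (ha i (Finset.mem_range.1 hi)))
  · refine Dvd.dvd.mul_right ?_ _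
    have heval : (hpoly p n q).eval x = x ^ (p ^ (n-1) * (p-1)) - q := by
      simp [hpoly]
    rw [heval]
    have hN : ((p^n : ℕ) : ℤ) = (p:ℤ)^n := by push_cast; ring
    rw [← hN, ← ZMod.intCast_zmod_eq_zero_iff_dvd]
    haveI : Fact p.Prime := ⟨hp⟩
    haveI : NeZero (p^n) := ⟨pow_ne_zero _ hp.pos.ne'⟩
    push_cast
    have hq' : ((q:ℕ) : ZMod (p^n)) = 1 := by
      have hdvd : ((p^n : ℕ) : ℤ) ∣ (1 - (q:ℤ)) := by
        rw [hN]
        exact dvd_trans (pow_dvd_pow _ (by omega)) hq1.dvd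
      have := (ZMod.intCast_zmod_eq_zero_iff_dvd _ _).2 hdvd
      push_cast at this
      linear_combination -this
    have hunit : IsUnit ((x : ZMod (p^n))) := by
      have h1 : ¬ p ∣ x.natAbs := fun h => hx (Int.natCast_dvd.mpr h)
      have h2 : Nat.Coprime x.natAbs (p^n) :=
        Nat.Coprime.pow_right _ (((Nat.Prime.coprime_iff_not_dvd hp).2 h1).symm)
      have h3 : IsUnit ((x.natAbs : ℕ) : ZMod (p^n)) := (ZMod.isUnit_iff_coprime _ _).2 h2
      rcases Int.natAbs_eq x with h | h
      · rw [h, Int.cast_natCast]; exact h3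
      · rw [h, Int.cast_neg, Int.cast_natCast]; exact h3.neg
    have htot : ((x : ZMod (p^n)))^(p ^ (n-1) * (p-1)) = 1 := by
      have hu := ZMod.pow_totient hunit.unit
      have hφ : Nat.totient (p^n) = p ^ (n-1) * (p-1) := Nat.totient_prime_pow hp (by omega)
      have := congrArg (fun u : (ZMod (p^n))ˣ => (u : ZMod (p^n))) hu
      simp only [Units.val_pow_eq_pow_val, hunit.unit_spec, Units.val_one] at this
      rw [← hφ]
      exact this
    rw [htot, hq', sub_self]


/-- Example `typeI`, irreducibility part.
Let `p` be an odd prime, `n > 1`, `q` a prime with `q ≡ 1 (mod p^(n+1))` and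
`q > p^(n-1)(p-1) + n`, and `h(x) = x^(p^(n-1)(p-1)) − q`. Let `a_1, …, a_n` be integers,
each divisible by `p`, not covering all residue classes mod `p²` that are divisible
by `p`, and none divisible by any prime `l ≤ p^(n-1)(p-1) + n`, `l ≠ p`. Then
`f = h(x)·∏ (x − a_i) / p^n` lies in `Int(ℤ)` and is irreducible in `Int(ℤ)`. -/
theorem stmt8 (p : ℕ) (hp : p.Prime) (hp2 : p ≠ 2)
    (n : ℕ) (hn : 1 < n)
    (q : ℕ) (hq : q.Prime) (hq1 : (q : ℤ) ≡ 1 [ZMOD ((p : ℤ) ^ (n + 1))])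
    (hqbig : p ^ (n - 1) * (p - 1) + n < q)
    (a : ℕ → ℤ)
    (ha : ∀ i < n, (p : ℤ) ∣ a i)
    (hcover : ∃ c : ℤ, (p : ℤ) ∣ c ∧ ∀ i < n, ¬ (a i ≡ c [ZMOD ((p : ℤ) ^ 2)]))
    (hl : ∀ i < n, ∀ l : ℕ, l.Prime → l ≤ p ^ (n - 1) * (p - 1) + n → l ≠ p →
        ¬ ((l : ℤ) ∣ a i)) :
    ∃ hf : fpoly p n q a ∈ IntZ, Irreducible (⟨fpoly p n q a, hf⟩ : IntZ) := by
  classical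
  haveI hpf : Fact p.Prime := ⟨hp⟩
  obtain ⟨c0, hc0p, hc0⟩ := hcover
  have hp2le := hp.two_le
  have hm1 : 0 < p ^ (n - 1) * (p - 1) := by
    have h3 : 0 < p ^ (n-1) := Nat.pow_pos (by omega)
    have h4 : 0 < p - 1 := by omega
    positivity
  have hpZne : (p:ℤ) ≠ 0 := by exact_mod_cast hp.pos.ne'
  have hpQne : ((p:ℚ)^n) ≠ 0 := pow_ne_zero _ (by exact_mod_cast hp.pos.ne')
  set gZ : Polynomial ℤ := hpoly p n q * ∏ i ∈ Finset.range n, (X - Polynomial.C (a i))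
    with hgZdef
  have hvals : ∀ x : ℤ, ∃ w : ℤ, gZ.eval x = (p:ℤ)^n * w :=
    fun x => aux_vals p n q hp hn hq1 a ha x
  choose W hW using hvals
  have hgeval : ∀ x : ℤ, gZ.eval x
      = (x^(p ^ (n - 1) * (p - 1)) - q) * ∏ i ∈ Finset.range n, (x - a i) := by
    intro x
    rw [hgZdef, eval_mul, eval_prod]
    simp [hpoly]
  have hfeval : ∀ x : ℤ, (fpoly p n q a).eval (x:ℚ) = ((W x : ℤ) : ℚ) := by
    intro x
    rw [fpoly, eval_mul, eval_C, toQ, eval_intCast_map]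
    rw [show (hpoly p n q * ∏ i ∈ Finset.range n, (X - Polynomial.C (a i))) = gZ from rfl]
    simp only [Int.cast_id, eq_intCast]
    rw [hW x]
    push_cast
    field_simp
  have hf : fpoly p n q a ∈ IntZ := fun x => ⟨W x, hfeval x⟩
  -- p does not divide q
  have hpq : ¬ (p:ℤ) ∣ (q:ℤ) := by
    intro hd
    have h1 : (p:ℤ) ∣ 1 - q := dvd_trans (dvd_pow_self (p:ℤ) (Nat.succ_ne_zero n)) hq1.dvd
    have h2 : (p:ℤ) ∣ 1 := by
      have := h1.add hd
      simpa using this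
    have := Int.eq_one_of_dvd_one (by positivity) h2
    omega
  -- the b_i's
  have hc0ai : ∀ i : ℕ, ∃ b : ℤ, i < n →
      (a i ≠ c0 ∧ c0 - a i = p * b ∧ ¬ (p:ℤ) ∣ b) := by
    intro i
    by_cases hi : i < n
    · have hd1 : (p:ℤ) ∣ c0 - a i := dvd_sub hc0p (ha i hi)
      have hd2 : ¬ ((p:ℤ)^2 ∣ c0 - a i) := by
        intro hdd
        exact hc0 i hi (Int.modEq_iff_dvd.2 hdd)
      obtain ⟨b, hb⟩ := hd1
      refine ⟨b, fun _ => ⟨?_, hb, ?_⟩⟩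
      · intro he
        apply hd2
        rw [he]
        simp
      · intro hpb
        apply hd2
        obtain ⟨e, he⟩ := hpb
        rw [hb, he, sq]
        exact ⟨e, by ring⟩
    · exact ⟨0, fun h => absurd h hi⟩
  choose b hb using hc0ai
  -- monicity and degree of gZ
  have hhmonic : (hpoly p n q).Monic := monic_X_pow_sub_C _ (by omega)
  have hhdeg : (hpoly p n q).natDegree = p ^ (n-1) * (p-1) := natDegree_X_pow_sub_C
  have hgmonic : gZ.Monic :=
    hhmonic.mul (monic_prod_of_monic _ _ fun i _ => monic_X_sub_C _)
  have hgdeg : gZ.natDegree = p ^ (n-1) * (p-1) + n := by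
    rw [hgZdef, hhmonic.natDegree_mul (monic_prod_of_monic _ _ fun i _ => monic_X_sub_C _),
      hhdeg, natDegree_prod_of_monic _ _ (fun i _ => monic_X_sub_C _)]
    rw [Finset.sum_congr rfl (fun i _ => natDegree_X_sub_C (x := a i))]
    simp
  -- Lemma A : image primitivity
  have hA : ∀ l : ℕ, l.Prime → ∃ x : ℤ, ¬ (l:ℤ) ∣ W x := by
    intro l hlpr
    have hWl : ∀ x : ℤ, (l:ℤ) ∣ W x → (l:ℤ) ∣ gZ.eval x := fun x hd => by
      rw [hW x]; exact hd.mul_left _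
    by_cases hlp : l = p
    · refine ⟨c0, fun hd => ?_⟩
      rw [hlp] at hd
      have hprod : ∏ i ∈ Finset.range n, (c0 - a i)
          = (p:ℤ)^n * ∏ i ∈ Finset.range n, b i := by
        calc ∏ i ∈ Finset.range n, (c0 - a i)
            = ∏ i ∈ Finset.range n, ((p:ℤ) * b i) :=
              Finset.prod_congr rfl (fun i hi => (hb i (Finset.mem_range.1 hi)).2.1)
          _ = (∏ _i ∈ Finset.range n, (p:ℤ)) * ∏ i ∈ Finset.range n, b i :=
              Finset.prod_mul_distrib
          _ = (p:ℤ)^n * ∏ i ∈ Finset.range n, b i := by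
              rw [Finset.prod_const, Finset.card_range]
      have hWc0 : W c0 = (c0^(p ^ (n - 1) * (p - 1)) - q) * ∏ i ∈ Finset.range n, b i := by
        have h1 : (p:ℤ)^n * W c0
            = (p:ℤ)^n * ((c0^(p ^ (n - 1) * (p - 1)) - q) * ∏ i ∈ Finset.range n, b i) := by
          rw [← hW c0, hgeval c0, hprod]
          ring
        exact mul_left_cancel₀ (pow_ne_zero _ hpZne) h1
      rw [hWc0] at hd
      have hpZ : Prime (p:ℤ) := Nat.prime_iff_prime_int.mp hp
      rcases hpZ.dvd_mul.1 hd with h | h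
      · have hpc : (p:ℤ) ∣ c0^(p ^ (n - 1) * (p - 1)) := dvd_pow hc0p (by omega)
        have : (p:ℤ) ∣ (q:ℤ) := by
          have := dvd_sub hpc h
          simpa using this
        exact hpq this
      · obtain ⟨i, hi, hdi⟩ := (hpZ.dvd_finset_prod_iff _).1 h
        exact (hb i (Finset.mem_range.1 hi)).2.2 hdi
    · by_cases hle : l ≤ p ^ (n - 1) * (p - 1) + n
      · refine ⟨0, fun hd => ?_⟩
        have hd' := hWl 0 hd
        rw [hgeval 0, zero_pow (by omega : p ^ (n-1) * (p-1) ≠ 0), zero_sub] at hd'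
        have hlZ : Prime (l:ℤ) := Nat.prime_iff_prime_int.mp hlpr
        rcases hlZ.dvd_mul.1 hd' with h | h
        · have h1 : (l:ℤ) ∣ (q:ℤ) := (dvd_neg.1 h)
          have h2 : l ∣ q := Int.natCast_dvd_natCast.1 h1
          have h3 : l = q := (Nat.prime_dvd_prime_iff_eq hlpr hq).1 h2
          omega
        · obtain ⟨i, hi, hdi⟩ := (hlZ.dvd_finset_prod_iff _).1 h
          have h1 : (l:ℤ) ∣ a i := by
            rw [zero_sub] at hdi
            exact (dvd_neg.1 hdi)
          exact hl i (Finset.mem_range.1 hi) l hlpr hle hlp h1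
      · haveI : Fact l.Prime := ⟨hlpr⟩
        have hglne : gZ.map (Int.castRingHom (ZMod l)) ≠ 0 := (hgmonic.map _).ne_zero
        have hgldeg : (gZ.map (Int.castRingHom (ZMod l))).natDegree
            = p ^ (n-1) * (p-1) + n := by
          rw [hgmonic.natDegree_map, hgdeg]
        obtain ⟨r, hr⟩ := (gZ.map (Int.castRingHom (ZMod l))).exists_eval_ne_zero_of_natDegree_lt_card hglne (by
          rw [hgldeg, Cardinal.mk_fintype, ZMod.card]
          exact_mod_cast (by omega : p ^ (n-1) * (p-1) + n < l))
        refine ⟨(r.val : ℤ), fun hd => ?_⟩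
        have hd' := hWl _ hd
        have h0 : ((gZ.eval ((r.val : ℤ)) : ℤ) : ZMod l) = 0 :=
          (ZMod.intCast_zmod_eq_zero_iff_dvd _ _).2 hd'
        have h1 : eval (((r.val : ℤ) : ZMod l)) (gZ.map (Int.castRingHom (ZMod l))) = 0 := by
          rw [eval_intCast_map, eq_intCast]
          exact h0
        have hrr : (((r.val : ℤ)) : ZMod l) = r := by
          rw [Int.cast_natCast]
          exact ZMod.natCast_rightInverse r
        rw [hrr] at h1
        exact hr h1
  -- the ℚ-side objects
  have hQmonic : (toQ (hpoly p n q)).Monic := hhmonic.map _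
  have hQne : toQ (hpoly p n q) ≠ 0 := hQmonic.ne_zero
  have hhirr : Irreducible (toQ (hpoly p n q)) := aux_hpoly_irred p n q hp hn hq
  set PQ : Polynomial ℚ := ∏ i ∈ Finset.range n, (X - Polynomial.C ((a i : ℚ)))
    with hPQdef
  have hPQmonic : PQ.Monic := monic_prod_of_monic _ _ fun i _ => monic_X_sub_C _
  have hPQdeg : PQ.natDegree = n := by
    rw [hPQdef, natDegree_prod_of_monic _ _ fun i _ => monic_X_sub_C _,
      Finset.sum_congr rfl (fun i _ => natDegree_X_sub_C (x := ((a i : ℤ):ℚ)))]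
    simp
  have hfQ : fpoly p n q a = C (((p:ℚ)^n)⁻¹) * (toQ (hpoly p n q) * PQ) := by
    rw [fpoly]
    congr 1
    rw [toQ, toQ, Polynomial.map_mul, Polynomial.map_prod]
    congr 1
    refine Finset.prod_congr rfl (fun i _ => ?_)
    rw [Polynomial.map_sub, Polynomial.map_X, Polynomial.map_C]
    norm_num
  have hfne : fpoly p n q a ≠ 0 := by
    rw [hfQ]
    exact mul_ne_zero (by simpa using inv_ne_zero hpQne) (mul_ne_zero hQne hPQmonic.ne_zero)
  have hfdeg : (fpoly p n q a).natDegree = p ^ (n-1) * (p-1) + n := by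
    rw [hfQ, natDegree_C_mul (inv_ne_zero hpQne), natDegree_mul hQne hPQmonic.ne_zero,
      hPQdeg, toQ, hhmonic.natDegree_map, hhdeg]
  -- valuation facts for roots
  have hvroot1 : ∀ i, i < n → ((1:ℚ) - ((a i : ℤ):ℚ) ≠ 0
      ∧ padicValRat p (1 - ((a i : ℤ):ℚ)) = 0) := by
    intro i hi
    have hnd : ¬ (p:ℤ) ∣ (1 - a i) := by
      intro hdd
      have h2 : (p:ℤ) ∣ 1 := by
        have := hdd.add (ha i hi)
        simpa using this
      have := Int.eq_one_of_dvd_one (by positivity) h2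
      omega
    have hzne : (1 - a i : ℤ) ≠ 0 := fun h => hnd (by rw [h]; exact dvd_zero _)
    have hcast : (1:ℚ) - ((a i : ℤ):ℚ) = ((1 - a i : ℤ) : ℚ) := by push_cast; ring
    constructor
    · rw [hcast]
      exact_mod_cast hzne
    · rw [hcast, padicValRat.of_int, padicValInt.eq_zero_of_not_dvd hnd]
      simp
  have hvrootc0 : ∀ i, i < n → (((c0:ℤ):ℚ) - ((a i : ℤ):ℚ) ≠ 0
      ∧ padicValRat p (((c0:ℤ):ℚ) - ((a i : ℤ):ℚ)) = 1) := by
    intro i hi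
    obtain ⟨hne, heq, hnd⟩ := hb i hi
    have hbne : (b i : ℤ) ≠ 0 := fun h => hnd (by rw [h]; exact dvd_zero _)
    have hcast : ((c0:ℤ):ℚ) - ((a i : ℤ):ℚ) = ((c0 - a i : ℤ) : ℚ) := by push_cast; ring
    constructor
    · rw [hcast]
      exact_mod_cast sub_ne_zero.2 (Ne.symm hne)
    · rw [hcast, heq]
      push_cast
      rw [padicValRat.mul (by exact_mod_cast hp.pos.ne' : ((p:ℕ):ℚ) ≠ 0)
        (by exact_mod_cast hbne : ((b i : ℤ):ℚ) ≠ 0)]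
      rw [padicValRat.self hp.one_lt,
        show padicValRat p ((b i : ℤ):ℚ) = 0 from by
          rw [padicValRat.of_int, padicValInt.eq_zero_of_not_dvd hnd]; simp]
      ring
  -- the key lemma
  have key : ∀ F1 F2 : Polynomial ℚ, F1 ∈ IntZ → F2 ∈ IntZ →
      fpoly p n q a = F1 * F2 → toQ (hpoly p n q) ∣ F1 →
      ∃ w : ℤ, w * w = 1 ∧ F2 = Polynomial.C ((w:ℤ):ℚ) := by
    intro F1 F2 hF1 hF2 hfe hdvd
    obtain ⟨G, hG⟩ := hdvd
    have hF1ne : F1 ≠ 0 := fun h => hfne (by rw [hfe, h, zero_mul])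
    have hF2ne : F2 ≠ 0 := fun h => hfne (by rw [hfe, h, mul_zero])
    have hGne : G ≠ 0 := fun h => hF1ne (by rw [hG, h, mul_zero])
    have hcancel : G * F2 = C (((p:ℚ)^n)⁻¹) * PQ := by
      apply mul_left_cancel₀ hQne
      calc toQ (hpoly p n q) * (G * F2) = F1 * F2 := by rw [hG]; ring
        _ = fpoly p n q a := hfe.symm
        _ = toQ (hpoly p n q) * (C (((p:ℚ)^n)⁻¹) * PQ) := by rw [hfQ]; ring
    have hG' : (C ((p:ℚ)^n) * G) * F2 = PQ := by
      calc (C ((p:ℚ)^n) * G) * F2 = C ((p:ℚ)^n) * (G * F2) := by ring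
        _ = C ((p:ℚ)^n) * (C (((p:ℚ)^n)⁻¹) * PQ) := by rw [hcancel]
        _ = PQ := by rw [← mul_assoc, ← C_mul, mul_inv_cancel₀ hpQne, C_1, one_mul]
    have hF2dvd : F2 ∣ PQ := Dvd.intro_left _ hG'
    have hGdvd : G ∣ PQ := ⟨C ((p:ℚ)^n) * F2, by rw [← hG']; ring⟩
    have hPQsp : PQ.Splits := Splits.prod fun i _ => Splits.X_sub_C _
    have hF2sp : F2.Splits :=
      Splits.of_dvd hPQsp hPQmonic.ne_zero hF2dvd
    have hGsp : G.Splits :=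
      Splits.of_dvd hPQsp hPQmonic.ne_zero hGdvd
    have hPQroots : ∀ r ∈ PQ.roots, ∃ i, i < n ∧ r = ((a i : ℤ) : ℚ) := by
      intro r hr
      have h1 : PQ.eval r = 0 := (mem_roots'.1 hr).2
      rw [hPQdef, eval_prod] at h1
      obtain ⟨i, hi, h2⟩ := Finset.prod_eq_zero_iff.1 h1
      simp only [eval_sub, eval_X, eval_C] at h2
      exact ⟨i, Finset.mem_range.1 hi, sub_eq_zero.1 h2⟩
    have hF2roots : ∀ r ∈ F2.roots, ∃ i, i < n ∧ r = ((a i : ℤ):ℚ) :=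
      fun r hr => hPQroots r
        (Multiset.mem_of_le (roots.le_of_dvd hPQmonic.ne_zero hF2dvd) hr)
    have hGroots : ∀ r ∈ G.roots, ∃ i, i < n ∧ r = ((a i : ℤ):ℚ) :=
      fun r hr => hPQroots r
        (Multiset.mem_of_le (roots.le_of_dvd hPQmonic.ne_zero hGdvd) hr)
    have hlcF2 : F2.leadingCoeff ≠ 0 := leadingCoeff_ne_zero.2 hF2ne
    have hlcG : G.leadingCoeff ≠ 0 := leadingCoeff_ne_zero.2 hGne
    have heval : ∀ (F : Polynomial ℚ), F.Splits → ∀ (x : ℚ),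
        F.eval x = F.leadingCoeff * ((F.roots.map (fun r => x - r)).prod) := by
      intro F hsp x
      conv_lhs => rw [hsp.eq_prod_roots]
      rw [eval_mul, eval_C, eval_multiset_prod, Multiset.map_map]
      congr 2
      refine Multiset.map_congr rfl (fun r _ => ?_)
      simp
    -- V1 : v(lc F2) ≥ 0
    obtain ⟨w2, hw2⟩ := hF2 1
    rw [Int.cast_one] at hw2
    have hw2eq : (w2 : ℚ) = F2.leadingCoeff * ((F2.roots.map (fun r => 1 - r)).prod) := by
      rw [← hw2, heval F2 hF2sp 1]
    have hall1 : ∀ y ∈ F2.roots.map (fun r => (1:ℚ) - r), y ≠ 0 ∧ padicValRat p y = 0 := by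
      intro y hy
      obtain ⟨r, hr, rfl⟩ := Multiset.mem_map.1 hy
      obtain ⟨i, hi, rfl⟩ := hF2roots r hr
      exact hvroot1 i hi
    have hprodne : (F2.roots.map (fun r => (1:ℚ) - r)).prod ≠ 0 :=
      Multiset.prod_ne_zero (fun h0 => (hall1 0 h0).1 rfl)
    have hw2ne : (w2:ℚ) ≠ 0 := by rw [hw2eq]; exact mul_ne_zero hlcF2 hprodne
    have hv2 : padicValRat p F2.leadingCoeff = padicValRat p (w2:ℚ) := by
      rw [hw2eq, padicValRat.mul hlcF2 hprodne,
        aux_padic_prod p _ (fun y hy => (hall1 y hy).1)]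
      have hzero : ((F2.roots.map (fun r => (1:ℚ) - r)).map (padicValRat p)).sum = 0 :=
        Multiset.sum_eq_zero (fun v hv => by
          obtain ⟨y, hy, rfl⟩ := Multiset.mem_map.1 hv
          exact (hall1 y hy).2)
      rw [hzero, add_zero]
    have hv2' : 0 ≤ padicValRat p F2.leadingCoeff := by
      rw [hv2, padicValRat.of_int]
      exact Int.natCast_nonneg _
    -- V2 : v(lc G) + #roots G ≥ 0
    obtain ⟨w1, hw1⟩ := hF1 c0
    have hhc0nd : ¬ (p:ℤ) ∣ (c0^(p ^ (n - 1) * (p - 1)) - q) := by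
      intro hdd
      have hpc : (p:ℤ) ∣ c0^(p ^ (n - 1) * (p - 1)) := dvd_pow hc0p (by omega)
      have : (p:ℤ) ∣ (q:ℤ) := by
        have := dvd_sub hpc hdd
        simpa using this
      exact hpq this
    have hhc0ne : ((c0^(p ^ (n - 1) * (p - 1)) - q : ℤ):ℚ) ≠ 0 := by
      have : (c0^(p ^ (n - 1) * (p - 1)) - q : ℤ) ≠ 0 :=
        fun h => hhc0nd (by rw [h]; exact dvd_zero _)
      exact_mod_cast this
    have hw1eq : (w1:ℚ) = ((c0^(p ^ (n - 1) * (p - 1)) - q : ℤ):ℚ)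
        * (G.leadingCoeff * ((G.roots.map (fun r => ((c0:ℤ):ℚ) - r)).prod)) := by
      rw [← hw1, hG, eval_mul]
      congr 1
      · rw [toQ, eval_intCast_map]
        congr 1
        simp [hpoly]
      · exact heval G hGsp ((c0:ℤ):ℚ)
    have hallc0 : ∀ y ∈ G.roots.map (fun r => ((c0:ℤ):ℚ) - r),
        y ≠ 0 ∧ padicValRat p y = 1 := by
      intro y hy
      obtain ⟨r, hr, rfl⟩ := Multiset.mem_map.1 hy
      obtain ⟨i, hi, rfl⟩ := hGroots r hr
      exact hvrootc0 i hi
    have hprodc0ne : (G.roots.map (fun r => ((c0:ℤ):ℚ) - r)).prod ≠ 0 :=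
      Multiset.prod_ne_zero (fun h0 => (hallc0 0 h0).1 rfl)
    have hw1ne : (w1:ℚ) ≠ 0 := by
      rw [hw1eq]
      exact mul_ne_zero hhc0ne (mul_ne_zero hlcG hprodc0ne)
    have hv1 : padicValRat p (w1:ℚ)
        = padicValRat p G.leadingCoeff + (Multiset.card G.roots : ℤ) := by
      rw [hw1eq, padicValRat.mul hhc0ne (mul_ne_zero hlcG hprodc0ne),
        padicValRat.mul hlcG hprodc0ne,
        aux_padic_prod p _ (fun y hy => (hallc0 y hy).1)]
      rw [show padicValRat p ((c0^(p ^ (n - 1) * (p - 1)) - q : ℤ):ℚ) = 0 from by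
        rw [padicValRat.of_int, padicValInt.eq_zero_of_not_dvd hhc0nd]; simp]
      have hones : ((G.roots.map (fun r => ((c0:ℤ):ℚ) - r)).map (padicValRat p)).sum
          = (Multiset.card G.roots : ℤ) := by
        rw [show (G.roots.map (fun r => ((c0:ℤ):ℚ) - r)).map (padicValRat p)
            = Multiset.replicate (Multiset.card G.roots) (1:ℤ) from ?_]
        · rw [Multiset.sum_replicate]
          simp
        · refine Multiset.eq_replicate.2 ⟨by simp, fun v hv => ?_⟩
          obtain ⟨y, hy, rfl⟩ := Multiset.mem_map.1 hv
          exact (hallc0 y hy).2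
      rw [hones]
      ring
    have hv1' : 0 ≤ padicValRat p (w1:ℚ) := by
      rw [padicValRat.of_int]
      exact Int.natCast_nonneg _
    -- leading coefficients multiply to p^{-n}
    have hlcprod : G.leadingCoeff * F2.leadingCoeff = ((p:ℚ)^n)⁻¹ := by
      have h1 := congrArg leadingCoeff hcancel
      rw [leadingCoeff_mul, leadingCoeff_mul, leadingCoeff_C, hPQmonic.leadingCoeff,
        mul_one] at h1
      exact h1
    have hvsum : padicValRat p G.leadingCoeff + padicValRat p F2.leadingCoeff
        = -(n:ℤ) := by
      have h1 : padicValRat p (G.leadingCoeff * F2.leadingCoeff)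
          = padicValRat p (((p:ℚ)^n)⁻¹) := by rw [hlcprod]
      rw [padicValRat.mul hlcG hlcF2, padicValRat.inv,
        padicValRat.pow, padicValRat.self hp.one_lt] at h1
      simpa using h1
    -- degrees
    have hdegsum : G.natDegree + F2.natDegree = n := by
      have h1 := congrArg natDegree hG'
      rw [natDegree_mul (mul_ne_zero (C_ne_zero.mpr hpQne) hGne) hF2ne,
        natDegree_C_mul hpQne, hPQdeg] at h1
      exact h1
    have hcardG : (Multiset.card G.roots : ℕ) = G.natDegree :=
      (splits_iff_card_roots).1 hGsp
    -- conclude that F2 is constant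
    have hF2deg0 : F2.natDegree = 0 := by
      have e1 : 0 ≤ padicValRat p G.leadingCoeff + (G.natDegree:ℤ) := by
        rw [← hcardG]
        rw [hv1] at hv1'
        exact_mod_cast hv1'
      have e2 : (G.natDegree:ℤ) + (F2.natDegree:ℤ) = (n:ℤ) := by exact_mod_cast hdegsum
      omega
    obtain ⟨c2, hc2⟩ := natDegree_eq_zero.1 hF2deg0
    obtain ⟨w, hwv⟩ := hF2 0
    have hc2w : c2 = ((w:ℤ):ℚ) := by
      rw [← hwv, ← hc2]
      simp
    have hwne : w ≠ 0 := by
      intro h0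
      apply hF2ne
      rw [← hc2, hc2w, h0]
      simp
    refine ⟨w, ?_, by rw [← hc2, hc2w]⟩
    -- w = ±1
    have habs : w.natAbs = 1 := by
      by_contra hnabs
      obtain ⟨l, hlpr2, hldvd⟩ := Nat.exists_prime_and_dvd hnabs
      obtain ⟨x, hx⟩ := hA l hlpr2
      apply hx
      obtain ⟨u, hu⟩ := hF1 x
      have hcast : (W x : ℚ) = ((u * w : ℤ):ℚ) := by
        rw [← hfeval x, hfe, eval_mul, hu, ← hc2, hc2w]
        push_cast
        simp
      have hWx : W x = u * w := by exact_mod_cast hcast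
      rw [hWx]
      have hlw : (l:ℤ) ∣ w := by
        rwa [Int.natCast_dvd]
      exact hlw.mul_left u
    rcases Int.natAbs_eq_iff.mp habs with h | h <;> rw [h] <;> ring
  -- assemble
  refine ⟨hf, ?_, ?_⟩
  · -- not a unit
    intro hu
    obtain ⟨v, hv⟩ := hu.exists_right_inv
    have h1 : (fpoly p n q a) * (v : Polynomial ℚ) = 1 := by
      have := congrArg Subtype.val hv
      exact this
    have h2 : IsUnit (fpoly p n q a) := IsUnit.of_mul_eq_one _ h1
    have h3 := natDegree_eq_zero_of_isUnit h2
    rw [hfdeg] at h3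
    omega
  · rintro ⟨F1, hF1⟩ ⟨F2, hF2⟩ hmul
    have hfe : fpoly p n q a = F1 * F2 := congrArg Subtype.val hmul
    have hQprime : Prime (toQ (hpoly p n q)) := hhirr.prime
    have hQdvd : toQ (hpoly p n q) ∣ F1 * F2 := by
      rw [← hfe, hfQ]
      exact ⟨C (((p:ℚ)^n)⁻¹) * PQ, by ring⟩
    have hunit : ∀ (F : Polynomial ℚ) (hF : F ∈ IntZ) (w : ℤ), w * w = 1 →
        F = Polynomial.C ((w:ℤ):ℚ) → IsUnit (⟨F, hF⟩ : IntZ) := by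
      intro F hF w hw2 hFC
      refine IsUnit.of_mul_eq_one ⟨F, hF⟩ (Subtype.ext ?_)
      show F * F = 1
      rw [hFC, ← C_mul]
      rw [show ((w:ℤ):ℚ) * ((w:ℤ):ℚ) = ((w * w : ℤ):ℚ) from by push_cast; ring, hw2]
      simp
    rcases hQprime.2.2 F1 F2 hQdvd with hd | hd
    · obtain ⟨w, hw2, hFC⟩ := key F1 F2 hF1 hF2 hfe hd
      exact Or.inr (hunit F2 hF2 w hw2 hFC)
    · obtain ⟨w, hw2, hFC⟩ := key F2 F1 hF2 hF1 (by rw [hfe]; ring) hd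
      exact Or.inl (hunit F1 hF1 w hw2 hFC)


end
end
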